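/- arXiv:1306.4891 — 9 statements merged into one kernel-verified Lean document; each statement's English description precedes it below -/
import Mathlib

section
/- For every positive integer n, f(n) = ∑_{d=1}^{n} μ(d)·(2^{⌊n/d⌋} − 1), where μ is the Möbius function and ⌊·⌋ is the floor function. -/
/-- `f n` is the number of nonempty relatively prime subsets of `{1, ..., n}`. -/
def f (n : ℕ) : ℕ :=
  ((Finset.Icc 1 n).powerset.filter fun A => A.Nonempty ∧ A.gcd id = 1).card

/-!
Möbius inversion writes the indicator of `gcd A = 1` as `∑_{d ∣ gcd A} μ(d)`, and `d ∣ gcd A` says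
that `A` consists of multiples of `d`. Summing over the nonempty `A ⊆ {1, …, n}` and exchanging the
two sums, `μ(d)` is weighted by the number of nonempty sets of multiples of `d` in `{1, …, n}`,
which is `2^⌊n/d⌋ - 1`.
-/

open Finset
open scoped ArithmeticFunction.Moebius

theorem sum_divisors_moebius (m : ℕ) :
    ∑ d ∈ m.divisors, (μ d : ℤ) = if m = 1 then 1 else 0 := by
  rw [← ArithmeticFunction.coe_mul_zeta_apply, ArithmeticFunction.moebius_mul_coe_zeta,
    ArithmeticFunction.one_apply]

theorem Nat.filter_Icc_dvd_eq_divisors {m n : ℕ} (hm : 0 < m) (hmn : m ≤ n) :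
    {d ∈ Icc 1 n | d ∣ m} = m.divisors := by
  ext d
  simp only [mem_filter, mem_Icc, Nat.mem_divisors]
  constructor
  · rintro ⟨-, hd⟩
    exact ⟨hd, hm.ne'⟩
  · rintro ⟨hd, -⟩
    exact ⟨⟨Nat.pos_of_dvd_of_pos hd hm, (Nat.le_of_dvd hm hd).trans hmn⟩, hd⟩

theorem gcd_mem_Icc_of_subset_Icc {A : Finset ℕ} {n : ℕ} (hA : A ⊆ Icc 1 n)
    (hne : A.Nonempty) : A.gcd id ∈ Icc 1 n := by
  obtain ⟨a, ha⟩ := hne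
  obtain ⟨ha_pos, ha_le⟩ := mem_Icc.1 (hA ha)
  have hdvd : A.gcd id ∣ a := gcd_dvd ha
  exact mem_Icc.2 ⟨Nat.pos_of_dvd_of_pos hdvd ha_pos, (Nat.le_of_dvd ha_pos hdvd).trans ha_le⟩

theorem sum_Icc_moebius_dvd_gcd {A : Finset ℕ} {n : ℕ} (hA : A ⊆ Icc 1 n) (hne : A.Nonempty) :
    ∑ d ∈ Icc 1 n with d ∣ A.gcd id, (μ d : ℤ) = if A.gcd id = 1 then 1 else 0 := by
  obtain ⟨hpos, hle⟩ := mem_Icc.1 (gcd_mem_Icc_of_subset_Icc hA hne)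
  rw [Nat.filter_Icc_dvd_eq_divisors hpos hle, sum_divisors_moebius]

theorem filter_powerset_nonempty_dvd_gcd {α β : Type*} [DecidableEq α]
    [CommMonoidWithZero β] [NormalizedGCDMonoid β] [DecidableRel (α := β) (· ∣ ·)]
    (s : Finset α) (f : α → β) (d : β) :
    {A ∈ s.powerset | A.Nonempty ∧ d ∣ A.gcd f} = {x ∈ s | d ∣ f x}.powerset.erase ∅ := by
  ext A
  simp only [mem_filter, mem_powerset, mem_erase, subset_iff, Finset.dvd_gcd_iff,
    nonempty_iff_ne_empty]
  constructor
  · rintro ⟨hs, hne, hd⟩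
    exact ⟨hne, fun x hx => ⟨hs hx, hd x hx⟩⟩
  · rintro ⟨hne, hs⟩
    exact ⟨fun x hx => (hs hx).1, hne, fun x hx => (hs hx).2⟩

theorem card_filter_powerset_Icc_nonempty_dvd_gcd (n d : ℕ) :
    #{A ∈ (Icc 1 n).powerset | A.Nonempty ∧ d ∣ A.gcd id} = 2 ^ (n / d) - 1 := by
  rw [filter_powerset_nonempty_dvd_gcd, card_erase_of_mem (empty_mem_powerset _), card_powerset,
    ← Nat.Ioc_filter_dvd_card_eq_div]
  rfl

theorem f_formula_general (n : ℕ) :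
    (f n : ℤ) = ∑ d ∈ Finset.Icc 1 n,
      (ArithmeticFunction.moebius d) * (2 ^ (n / d) - 1) := by
  calc (f n : ℤ)
      = ∑ A ∈ (Icc 1 n).powerset, if A.Nonempty ∧ A.gcd id = 1 then 1 else 0 := by
        rw [f, sum_boole]
    _ = ∑ A ∈ (Icc 1 n).powerset, ∑ d ∈ Icc 1 n,
          if A.Nonempty ∧ d ∣ A.gcd id then (μ d : ℤ) else 0 := by
        refine sum_congr rfl fun A hA => ?_
        by_cases hne : A.Nonempty
        · simp only [hne, true_and, ← sum_filter]
          exact (sum_Icc_moebius_dvd_gcd (mem_powerset.1 hA) hne).symm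
        · simp [hne]
    _ = ∑ d ∈ Icc 1 n, μ d * #{A ∈ (Icc 1 n).powerset | A.Nonempty ∧ d ∣ A.gcd id} := by
        rw [sum_comm]
        refine sum_congr rfl fun d _ => ?_
        rw [← sum_filter, sum_const, nsmul_eq_mul, mul_comm]
    _ = _ := by
        simp only [card_filter_powerset_Icc_nonempty_dvd_gcd]
        push_cast [Nat.one_le_two_pow]
        rfl

/-- Nathanson: `f(n) = ∑_{d ≤ n} μ(d) (2^{⌊n/d⌋} - 1)`. -/
theorem f_formula (n : ℕ) (hn : 0 < n) :
    (f n : ℤ) = ∑ d ∈ Finset.Icc 1 n,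
      (ArithmeticFunction.moebius d) * (2 ^ (n / d) - 1) :=
  f_formula_general n
end

section
/- For every positive integer n, E(n) = ∑_{d ∣ n} Φ(d) = 2^n − 1, where the sum is over positive divisors d of n. -/
open Finset

def Phi (n : ℕ) : ℕ :=
  ((Finset.Icc 1 n).powerset.filter fun A => A.Nonempty ∧ (insert n A).gcd id = 1).card

lemma fiber_card (n d : ℕ) (hn : 0 < n) (hd : d ∣ n) (hd0 : 0 < d) :
    (((Icc 1 n).powerset.filter fun A => A.Nonempty ∧ (insert n A).gcd id = n / d)).card
      = Phi d := by
  set g := n / d with hgdef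
  have hg0 : 0 < g := Nat.div_pos (Nat.le_of_dvd hn hd) hd0
  have hn' : n = g * d := by rw [hgdef, Nat.div_mul_cancel hd]
  unfold Phi
  refine Finset.card_bij' (fun A _ => A.image (· / g)) (fun B _ => B.image (g * ·))
    ?hi ?hj ?li ?ri
  case hi =>
    intro A hA
    simp only [mem_filter, mem_powerset] at hA ⊢
    obtain ⟨hsub, hne, hgcd⟩ := hA
    have hdvd : ∀ a ∈ A, g ∣ a := fun a ha => hgcd ▸ Finset.gcd_dvd (mem_insert_of_mem ha)
    refine ⟨?_, hne.image _, ?_⟩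
    · intro b hb
      simp only [mem_image] at hb
      obtain ⟨a, ha, rfl⟩ := hb
      have h1 : 1 ≤ a ∧ a ≤ n := by simpa using hsub ha
      rw [mem_Icc]
      constructor
      · exact (Nat.one_le_div_iff hg0).2 (Nat.le_of_dvd h1.1 (hdvd a ha))
      · calc a / g ≤ n / g := Nat.div_le_div_right h1.2
        _ = d := by rw [hn', Nat.mul_div_cancel_left _ hg0]
    · have himg : insert d (A.image (· / g)) = (insert n A).image (· / g) := by
        rw [image_insert, hn', Nat.mul_div_cancel_left _ hg0]
      rw [himg, Finset.gcd_image]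
      have h2 := Finset.gcd_div_eq_one (f := id) (s := insert n A) (i := n)
        (mem_insert_self _ _) (by simpa using hn.ne')
      rw [hgcd] at h2
      simpa using h2
  case hj =>
    intro B hB
    simp only [mem_filter, mem_powerset] at hB ⊢
    obtain ⟨hsub, hne, hgcd⟩ := hB
    refine ⟨?_, hne.image _, ?_⟩
    · intro a ha
      simp only [mem_image] at ha
      obtain ⟨b, hb, rfl⟩ := ha
      have h1 : 1 ≤ b ∧ b ≤ d := by simpa using hsub hb
      rw [mem_Icc]
      exact ⟨Nat.one_le_iff_ne_zero.2 (Nat.mul_ne_zero hg0.ne' (by omega)),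
        by rw [hn']; exact Nat.mul_le_mul_left g h1.2⟩
    · have himg : insert n (B.image (g * ·)) = (insert d B).image (g * ·) := by
        rw [image_insert, hn']
      rw [himg, Finset.gcd_image]
      have h3 : (insert d B).gcd (fun x => g * x) = g * (insert d B).gcd id := by
        simpa using Finset.gcd_mul_left (s := insert d B) (f := id) (a := g)
      simp only [Function.comp_def, id_eq]
      rw [h3, hgcd, Nat.mul_one]
  case li =>
    intro A hA
    simp only [mem_filter, mem_powerset] at hA
    obtain ⟨hsub, hne, hgcd⟩ := hA
    have hdvd : ∀ a ∈ A, g ∣ a := fun a ha => hgcd ▸ Finset.gcd_dvd (mem_insert_of_mem ha)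
    show (A.image (· / g)).image (g * ·) = A
    rw [image_image]
    have : A.image ((fun x => g * x) ∘ (· / g)) = A.image id :=
      Finset.image_congr fun a ha => by
        simp [Nat.mul_div_cancel' (hdvd a ha)]
    rw [this, image_id]
  case ri =>
    intro B hB
    show (B.image (g * ·)).image (· / g) = B
    rw [image_image]
    have : B.image ((· / g) ∘ (fun x => g * x)) = B.image id :=
      Finset.image_congr fun b hb => by
        simp [Nat.mul_div_cancel_left _ hg0]
    rw [this, image_id]

/-- The divisor sum of `Φ` satisfies `E(n) = ∑_{d ∣ n} Φ(d) = 2^n - 1`. -/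
theorem E_eq (n : ℕ) (hn : 0 < n) :
    ∑ d ∈ n.divisors, Phi d = 2 ^ n - 1 := by
  have h1 : ∑ d ∈ n.divisors, Phi d
      = ∑ d ∈ n.divisors, (((Icc 1 n).powerset.filter fun A =>
          A.Nonempty ∧ (insert n A).gcd id = n / d)).card :=
    Finset.sum_congr rfl fun d hd =>
      (fiber_card n d hn (Nat.dvd_of_mem_divisors hd) (Nat.pos_of_mem_divisors hd)).symm
  rw [h1]
  have h2 : ((Icc 1 n).powerset.filter (fun A => A.Nonempty)).card
      = ∑ d ∈ n.divisors, (((Icc 1 n).powerset.filter (fun A => A.Nonempty)).filter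
          fun A => n / (insert n A).gcd id = d).card := by
    apply Finset.card_eq_sum_card_fiberwise
    intro A _
    have hg : (insert n A).gcd id ∣ n := Finset.gcd_dvd (mem_insert_self _ _)
    exact Nat.mem_divisors.2 ⟨Nat.div_dvd_of_dvd hg, hn.ne'⟩
  have h3 : ∀ d ∈ n.divisors,
      (((Icc 1 n).powerset.filter (fun A => A.Nonempty)).filter
          fun A => n / (insert n A).gcd id = d)
      = ((Icc 1 n).powerset.filter fun A => A.Nonempty ∧ (insert n A).gcd id = n / d) := by
    intro d hd
    have hdn : d ∣ n := Nat.dvd_of_mem_divisors hd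
    rw [Finset.filter_filter]
    apply Finset.filter_congr
    intro A _
    have hg : (insert n A).gcd id ∣ n := Finset.gcd_dvd (mem_insert_self _ _)
    constructor
    · rintro ⟨hne, h⟩
      exact ⟨hne, by rw [← h, Nat.div_div_self hg hn.ne']⟩
    · rintro ⟨hne, h⟩
      exact ⟨hne, by rw [h, Nat.div_div_self hdn hn.ne']⟩
  rw [Finset.sum_congr rfl (fun d hd => congrArg Finset.card (h3 d hd))] at h2
  rw [← h2]
  have h4 : ((Icc 1 n).powerset.filter (fun A => ¬A.Nonempty)) = {∅} := by
    ext A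
    simp [Finset.not_nonempty_iff_eq_empty]
    rintro rfl; exact empty_subset _
  have h5 := Finset.card_filter_add_card_filter_not
    (s := (Icc 1 n).powerset) (p := fun A => A.Nonempty)
  rw [h4] at h5
  have h6 : (Icc 1 n).powerset.card = 2 ^ n := by
    rw [Finset.card_powerset, Nat.card_Icc]; congr 1
  simp only [Finset.card_singleton] at h5
  omega
end

section
/- For every positive integer n ≥ 1, Φ(n+1) = 2·(f(n+1) − f(n)). -/
/-- Ayad–Kihel: `Φ(n+1) = 2 (f(n+1) - f(n))` for every `n ≥ 1`. -/
theorem Phi_succ (n : ℕ) (hn : 1 ≤ n) :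
    (Phi (n + 1) : ℤ) = 2 * ((f (n + 1) : ℤ) - (f n : ℤ)) := by
  classical
  set P := (Finset.Icc 1 (n+1)).powerset with hP
  set S1 := P.filter (fun A => (n+1) ∈ A ∧ A.gcd id = 1) with hS1
  have hsub : ∀ A : Finset ℕ, (A ⊆ Finset.Icc 1 (n+1) ∧ (n+1) ∉ A) ↔ A ⊆ Finset.Icc 1 n := by
    intro A
    constructor
    · rintro ⟨h1, h2⟩ x hx
      have hx1 := h1 hx
      simp only [Finset.mem_Icc] at hx1 ⊢
      have hne : x ≠ n+1 := fun h => h2 (h ▸ hx)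
      omega
    · intro h
      refine ⟨fun x hx => ?_, fun hc => ?_⟩
      · have hx1 := h hx; simp only [Finset.mem_Icc] at hx1 ⊢; omega
      · have hc1 := h hc; simp only [Finset.mem_Icc] at hc1; omega
  -- f (n+1) = f n + S1.card
  have hf : f (n+1) = f n + S1.card := by
    have hpart := Finset.card_filter_add_card_filter_not
      (s := P.filter (fun A => A.Nonempty ∧ A.gcd id = 1)) (p := fun A => (n+1) ∈ A)
    have h1 : (P.filter (fun A => A.Nonempty ∧ A.gcd id = 1)).filter (fun A => (n+1) ∈ A)
        = S1 := by
      ext A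
      simp only [Finset.mem_filter, Finset.mem_powerset, hS1, hP]
      constructor
      · rintro ⟨⟨hA, _, hg⟩, hm⟩; exact ⟨hA, hm, hg⟩
      · rintro ⟨hA, hm, hg⟩; exact ⟨⟨hA, ⟨_, hm⟩, hg⟩, hm⟩
    have h2 : (P.filter (fun A => A.Nonempty ∧ A.gcd id = 1)).filter (fun A => ¬ (n+1) ∈ A)
        = (Finset.Icc 1 n).powerset.filter (fun A => A.Nonempty ∧ A.gcd id = 1) := by
      ext A
      simp only [Finset.mem_filter, Finset.mem_powerset, hP]
      constructor
      · rintro ⟨⟨hA, hq⟩, hm⟩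
        exact ⟨(hsub A).mp ⟨hA, hm⟩, hq⟩
      · rintro ⟨hA, hq⟩
        obtain ⟨hA', hm⟩ := (hsub A).mpr hA
        exact ⟨⟨hA', hq⟩, hm⟩
    rw [h1, h2] at hpart
    simp only [f, hP] at *
    omega
  -- Phi (n+1) = 2 * S1.card
  have hphi : Phi (n+1) = S1.card + S1.card := by
    have hpart := Finset.card_filter_add_card_filter_not
      (s := P.filter (fun A => A.Nonempty ∧ (insert (n+1) A).gcd id = 1))
      (p := fun A => (n+1) ∈ A)
    have h1 : (P.filter (fun A => A.Nonempty ∧ (insert (n+1) A).gcd id = 1)).filter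
        (fun A => (n+1) ∈ A) = S1 := by
      ext A
      simp only [Finset.mem_filter, Finset.mem_powerset, hS1, hP]
      constructor
      · rintro ⟨⟨hA, _, hg⟩, hm⟩
        rw [Finset.insert_eq_self.mpr hm] at hg
        exact ⟨hA, hm, hg⟩
      · rintro ⟨hA, hm, hg⟩
        exact ⟨⟨hA, ⟨_, hm⟩, by rw [Finset.insert_eq_self.mpr hm]; exact hg⟩, hm⟩
    have h2 : ((P.filter (fun A => A.Nonempty ∧ (insert (n+1) A).gcd id = 1)).filter
        (fun A => ¬ (n+1) ∈ A)).card = S1.card := by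
      apply Finset.card_bij (fun A _ => insert (n+1) A)
      · intro A hA
        simp only [Finset.mem_filter, Finset.mem_powerset, hP] at hA
        obtain ⟨⟨hA1, _, hg⟩, hm⟩ := hA
        simp only [Finset.mem_filter, Finset.mem_powerset, hS1, hP]
        refine ⟨Finset.insert_subset ?_ hA1, Finset.mem_insert_self _ _, hg⟩
        simp only [Finset.mem_Icc]; omega
      · intro A hA B hB h
        simp only [Finset.mem_filter] at hA hB
        have := congrArg (fun s => Finset.erase s (n+1)) h
        simpa [Finset.erase_insert hA.2, Finset.erase_insert hB.2] using this
      · intro B hB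
        simp only [Finset.mem_filter, Finset.mem_powerset, hS1, hP] at hB
        obtain ⟨hB1, hm, hg⟩ := hB
        refine ⟨B.erase (n+1), ?_, Finset.insert_erase hm⟩
        simp only [Finset.mem_filter, Finset.mem_powerset, hP]
        refine ⟨⟨(Finset.erase_subset _ _).trans hB1, ?_, ?_⟩, Finset.notMem_erase _ _⟩
        · -- erase nonempty: otherwise B = {n+1}, gcd = n+1 ≠ 1
          rw [Finset.nonempty_iff_ne_empty]
          intro he
          have hBeq : B = {n+1} := by
            have := Finset.insert_erase hm
            rw [he] at this
            simpa using this.symm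
          rw [hBeq] at hg
          simp [Finset.gcd_singleton] at hg
          omega
        · rw [Finset.insert_erase hm]; exact hg
    rw [h1, h2] at hpart
    simp only [Phi, hP] at *
    omega
  have hfn : (f (n+1) : ℤ) = f n + S1.card := by exact_mod_cast hf
  have hpn : (Phi (n+1) : ℤ) = S1.card + S1.card := by exact_mod_cast hphi
  rw [hpn, hfn]; ring
end

section
/- The sequences f(n)/2^n, Φ(n)/2^n, and D(n)/2^n all tend to 1 as n → ∞; that is, lim_{n→∞} f(n)/2^n = lim_{n→∞} Φ(n)/2^n = lim_{n→∞} D(n)/2^n = 1. -/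
/-- `D n = ∑_{d ∣ n} f d` is the divisor sum of `f`. -/
def D (n : ℕ) : ℕ := ∑ d ∈ n.divisors, f d

/-!
A subset of `{1, ..., n}` that is not relatively prime is empty or consists of multiples of its
gcd `d ∈ [2, n]`, and `{1, ..., n}` contains at most `n / 2` multiples of such a `d`; so at most
`1 + n 2^(n/2)` of the `2^n` subsets are missed by `f n`. `Φ(n)` lies between `f n` and `2^n`,
and `D(n)` between `f n` and `2^n + ∑_{d ∣ n, d < n} 2^d ≤ 2^n + n 2^(n/2)`.
-/

open Finset Filter Topology

theorem tendsto_div_nhds_one_of_abs_sub_le {α : Type*} {l : Filter α} {a b e : α → ℝ}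
    (hb : ∀ x, 0 < b x) (he : Tendsto (fun x => e x / b x) l (𝓝 0))
    (hab : ∀ᶠ x in l, |a x - b x| ≤ e x) :
    Tendsto (fun x => a x / b x) l (𝓝 1) := by
  rw [tendsto_iff_norm_sub_tendsto_zero]
  refine squeeze_zero' (.of_forall fun x => norm_nonneg _) (hab.mono fun x hx => ?_) he
  rw [Real.norm_eq_abs, div_sub_one (hb x).ne', abs_div, abs_of_pos (hb x)]
  exact div_le_div_of_nonneg_right hx (hb x).le

theorem two_pow_div_two_le_sqrt_two_pow (n : ℕ) : (2 : ℝ) ^ (n / 2) ≤ √2 ^ n :=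
  calc (2 : ℝ) ^ (n / 2) = √2 ^ (2 * (n / 2)) := by rw [pow_mul, Real.sq_sqrt zero_le_two]
    _ ≤ √2 ^ n := pow_le_pow_right₀ Real.one_lt_sqrt_two.le (Nat.mul_div_le n 2)

theorem tendsto_mul_two_pow_div_two_add_one_div_two_pow :
    Tendsto (fun n : ℕ => ((n : ℝ) * 2 ^ (n / 2) + 1) / 2 ^ n) atTop (𝓝 0) := by
  have hbound (n : ℕ) : ((n : ℝ) * 2 ^ (n / 2) + 1) / 2 ^ n ≤ n ^ 1 / √2 ^ n + (1 / 2) ^ n := by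
    have hsq : (2 : ℝ) ^ n = √2 ^ n * √2 ^ n := by rw [← mul_pow, Real.mul_self_sqrt zero_le_two]
    rw [add_div, one_div_pow, pow_one]
    refine add_le_add ?_ le_rfl
    calc (n : ℝ) * 2 ^ (n / 2) / 2 ^ n ≤ n * √2 ^ n / (√2 ^ n * √2 ^ n) := by
          rw [← hsq]; gcongr; exact two_pow_div_two_le_sqrt_two_pow n
      _ = n / √2 ^ n := by field_simp
  have hlim := (tendsto_pow_const_div_const_pow_of_one_lt 1 Real.one_lt_sqrt_two).add
    (tendsto_pow_atTop_nhds_zero_of_lt_one (by norm_num : (0 : ℝ) ≤ 1 / 2) (by norm_num))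
  rw [add_zero] at hlim
  exact squeeze_zero (fun n => by positivity) hbound hlim

theorem card_powerset_Icc_one (n : ℕ) : #(Icc 1 n).powerset = 2 ^ n := by simp

theorem f_le_two_pow (n : ℕ) : f n ≤ 2 ^ n :=
  (card_filter_le _ _).trans (card_powerset_Icc_one n).le

theorem Phi_le_two_pow (n : ℕ) : Phi n ≤ 2 ^ n :=
  (card_filter_le _ _).trans (card_powerset_Icc_one n).le

theorem f_le_Phi (n : ℕ) : f n ≤ Phi n := by
  refine card_le_card <|
    monotone_filter_right _ fun A _ (hA : A.Nonempty ∧ A.gcd id = 1) => ⟨hA.1, ?_⟩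
  rw [gcd_insert, hA.2, id, gcd_one_right]

theorem f_le_D {n : ℕ} (hn : n ≠ 0) : f n ≤ D n :=
  single_le_sum (fun d _ => Nat.zero_le (f d)) (Nat.mem_divisors_self n hn)

theorem card_powerset_filter_dvd_le {n d : ℕ} (hd : 2 ≤ d) :
    #{a ∈ Icc 1 n | d ∣ a}.powerset ≤ 2 ^ (n / 2) := by
  rw [card_powerset, show Icc 1 n = Ioc 0 n from Icc_add_one_left_eq_Ioc 0 n,
    Nat.Ioc_filter_dvd_card_eq_div]
  exact Nat.pow_le_pow_right two_pos (Nat.div_le_div_left hd two_pos)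

theorem gcd_mem_Icc_two {n : ℕ} {A : Finset ℕ} (hA : A ⊆ Icc 1 n) (hne : A.Nonempty)
    (hgcd : A.gcd id ≠ 1) : A.gcd id ∈ Icc 2 n := by
  obtain ⟨a, ha⟩ := hne
  have ha' := mem_Icc.mp (hA ha)
  have hle : A.gcd id ≤ a := Nat.le_of_dvd ha'.1 (gcd_dvd ha)
  have hpos : 0 < A.gcd id := Nat.pos_of_dvd_of_pos (gcd_dvd ha) ha'.1
  exact mem_Icc.mpr ⟨by omega, hle.trans ha'.2⟩

theorem filter_not_coprime_subset (n : ℕ) :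
    {A ∈ (Icc 1 n).powerset | ¬(A.Nonempty ∧ A.gcd id = 1)} ⊆
      insert ∅ ((Icc 2 n).biUnion fun d => {a ∈ Icc 1 n | d ∣ a}.powerset) := by
  intro A hA
  obtain ⟨hsub, hbad⟩ := mem_filter.mp hA
  rw [mem_powerset] at hsub
  rcases A.eq_empty_or_nonempty with rfl | hne
  · exact mem_insert_self _ _
  refine mem_insert_of_mem (mem_biUnion.mpr
    ⟨A.gcd id, gcd_mem_Icc_two hsub hne fun h => hbad ⟨hne, h⟩, ?_⟩)
  exact mem_powerset.mpr fun a ha => mem_filter.mpr ⟨hsub ha, gcd_dvd ha⟩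

theorem card_filter_not_coprime_le (n : ℕ) :
    #{A ∈ (Icc 1 n).powerset | ¬(A.Nonempty ∧ A.gcd id = 1)} ≤ n * 2 ^ (n / 2) + 1 :=
  calc _ ≤ #((Icc 2 n).biUnion fun d => {a ∈ Icc 1 n | d ∣ a}.powerset) + 1 :=
        (card_le_card (filter_not_coprime_subset n)).trans (card_insert_le _ _)
    _ ≤ ∑ d ∈ Icc 2 n, #{a ∈ Icc 1 n | d ∣ a}.powerset + 1 := by gcongr; exact card_biUnion_le
    _ ≤ #(Icc 2 n) * 2 ^ (n / 2) + 1 := by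
        gcongr
        exact sum_le_card_nsmul _ _ _ fun d hd => card_powerset_filter_dvd_le (mem_Icc.mp hd).1
    _ ≤ n * 2 ^ (n / 2) + 1 := by gcongr; simp

theorem two_pow_le_f_add (n : ℕ) : 2 ^ n ≤ f n + (n * 2 ^ (n / 2) + 1) := by
  rw [← card_powerset_Icc_one,
    ← card_filter_add_card_filter_not (fun A => A.Nonempty ∧ A.gcd id = 1)]
  exact Nat.add_le_add_left (card_filter_not_coprime_le n) _

theorem le_div_two_of_mem_properDivisors {n d : ℕ} (hd : d ∈ n.properDivisors) : d ≤ n / 2 := by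
  obtain ⟨⟨k, rfl⟩, hlt⟩ := Nat.mem_properDivisors.mp hd
  rw [Nat.le_div_iff_mul_le two_pos]
  have : 2 ≤ k := by rcases k with _ | _ | k <;> simp_all
  exact Nat.mul_le_mul_left d this

theorem sum_properDivisors_f_le (n : ℕ) : ∑ d ∈ n.properDivisors, f d ≤ n * 2 ^ (n / 2) :=
  calc _ ≤ #n.properDivisors * 2 ^ (n / 2) := sum_le_card_nsmul _ _ _ fun d hd =>
        (f_le_two_pow d).trans (Nat.pow_le_pow_right two_pos (le_div_two_of_mem_properDivisors hd))
    _ ≤ n * 2 ^ (n / 2) := by gcongr; exact (card_filter_le _ _).trans (by simp)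

theorem D_le (n : ℕ) : D n ≤ 2 ^ n + n * 2 ^ (n / 2) := by
  rcases eq_or_ne n 0 with rfl | hn
  · simp [D]
  rw [D, ← Nat.cons_self_properDivisors hn, sum_cons]
  exact add_le_add (f_le_two_pow n) (sum_properDivisors_f_le n)

theorem tendsto_div_two_pow_of_le_of_le {g : ℕ → ℕ}
    (hlo : ∀ᶠ n in atTop, 2 ^ n ≤ g n + (n * 2 ^ (n / 2) + 1))
    (hhi : ∀ n, g n ≤ 2 ^ n + (n * 2 ^ (n / 2) + 1)) :
    Tendsto (fun n => (g n : ℝ) / 2 ^ n) atTop (𝓝 1) := by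
  refine tendsto_div_nhds_one_of_abs_sub_le (fun n => by positivity)
    tendsto_mul_two_pow_div_two_add_one_div_two_pow ?_
  filter_upwards [hlo] with n hlo
  rw [abs_sub_le_iff, sub_le_iff_le_add', sub_le_iff_le_add']
  exact ⟨mod_cast hhi n, mod_cast hlo⟩

/-- `f(n)/2^n`, `Φ(n)/2^n`, and `D(n)/2^n` all tend to `1`. -/
theorem tendsto_div_two_pow :
    Filter.Tendsto (fun n : ℕ => (f n : ℝ) / 2 ^ n) Filter.atTop (nhds 1) ∧
    Filter.Tendsto (fun n : ℕ => (Phi n : ℝ) / 2 ^ n) Filter.atTop (nhds 1) ∧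
    Filter.Tendsto (fun n : ℕ => (D n : ℝ) / 2 ^ n) Filter.atTop (nhds 1) := by
  refine ⟨?_, ?_, ?_⟩
  · exact tendsto_div_two_pow_of_le_of_le (.of_forall two_pow_le_f_add)
      fun n => (f_le_two_pow n).trans (Nat.le_add_right _ _)
  · exact tendsto_div_two_pow_of_le_of_le
      (.of_forall fun n => (two_pow_le_f_add n).trans (Nat.add_le_add_right (f_le_Phi n) _))
      fun n => (Phi_le_two_pow n).trans (Nat.le_add_right _ _)
  · refine tendsto_div_two_pow_of_le_of_le ?_
      fun n => (D_le n).trans (Nat.add_le_add_left (Nat.le_succ _) _)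
    filter_upwards [eventually_ne_atTop 0] with n hn
    exact (two_pow_le_f_add n).trans (Nat.add_le_add_right (f_le_D hn) _)
end

section
/- For every positive integer N, ∑_{n=1}^{N} Φ(n) = 2·f(N) − 1. -/
open Finset

section Powerset

variable {α : Type*} [DecidableEq α]

lemma card_filter_powerset_insert {s : Finset α} {a : α} (ha : a ∉ s)
    (p : Finset α → Prop) [DecidablePred p] :
    #{A ∈ (insert a s).powerset | p A} =
      #{A ∈ s.powerset | p A} + #{A ∈ s.powerset | p (insert a A)} := by
  simp only [card_filter]
  exact sum_powerset_insert ha _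

lemma card_filter_powerset_nonempty_add (s : Finset α) (p : Finset α → Prop) [DecidablePred p] :
    #{A ∈ s.powerset | A.Nonempty ∧ p A} + (if p ∅ then 1 else 0) = #{A ∈ s.powerset | p A} := by
  have herase : {A ∈ s.powerset | A.Nonempty ∧ p A} = {A ∈ s.powerset | p A}.erase ∅ := by
    ext A
    simp [nonempty_iff_ne_empty, and_left_comm]
  rw [herase]
  split_ifs with hp
  · exact card_erase_add_one (by simpa using hp)
  · rw [erase_eq_of_notMem (by simpa using hp), add_zero]

end Powerset

def relPrimeWithMax (n : ℕ) : ℕ :=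
  #{A ∈ (Ico 1 n).powerset | (insert n A).gcd id = 1}

lemma f_succ (n : ℕ) : f (n + 1) = f n + relPrimeWithMax (n + 1) := by
  rw [f, ← Ico_insert_right (by omega : 1 ≤ n + 1),
    card_filter_powerset_insert (by simp), f, ← Ico_add_one_right_eq_Icc, relPrimeWithMax]
  simp only [insert_nonempty, true_and]

lemma Phi_add_ite_eq {n : ℕ} (hn : 0 < n) :
    Phi n + (if n = 1 then 1 else 0) = 2 * relPrimeWithMax n := by
  have hempty : ((insert n ∅ : Finset ℕ).gcd id = 1) ↔ n = 1 := by simp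
  rw [Phi, ← if_congr hempty rfl rfl, card_filter_powerset_nonempty_add,
    ← Ico_insert_right (by omega : 1 ≤ n), card_filter_powerset_insert (by simp)]
  simp only [insert_idem, relPrimeWithMax, two_mul]

lemma sum_Phi_add_ite_eq (N : ℕ) :
    ∑ n ∈ Icc 1 N, (Phi n + if n = 1 then 1 else 0) = 2 * f N := by
  induction N with
  | zero => rfl
  | succ N ih =>
    rw [sum_Icc_succ_top (by omega), ih, Phi_add_ite_eq (by omega), f_succ, mul_add]

/-- `∑_{n ≤ N} Φ(n) = 2 f(N) - 1` for every positive integer `N`. -/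
theorem sum_Phi_eq (N : ℕ) (hN : 0 < N) :
    (∑ n ∈ Finset.Icc 1 N, (Phi n : ℤ)) = 2 * (f N : ℤ) - 1 := by
  have hone : ∑ n ∈ Icc 1 N, (if n = 1 then 1 else 0) = 1 := by
    rw [sum_ite_eq' (Icc 1 N) 1 fun _ => 1, if_pos (mem_Icc.mpr ⟨le_rfl, hN⟩)]
  have h := sum_Phi_add_ite_eq N
  rw [sum_add_distrib, hone] at h
  rw [← Nat.cast_sum]
  omega
end

section
/- There exists a constant C > 0 such that for all positive integers N, |∑_{n=1}^{N} f(n) − (2^{N+1} − 2^{⌊N/2⌋}·(N − 2⌊N/2⌋ + 3) − 2^{⌊N/3⌋}·(N − 3⌊N/3⌋ + 4))| ≤ C·2^{N/5}, where 2^{N/5} denotes the real number 2 raised to the power N/5. -/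
/-!
Möbius inversion over the gcd gives `f n = ∑_{d ≤ n} μ(d) (2^⌊n/d⌋ - 1)`. The terms `d = 1, 2, 3`
give `2^n - 2^⌊n/2⌋ - 2^⌊n/3⌋`, the term `d = 4` vanishes, and the remaining ones are
`O(2^(n/5) + n 2^(n/6)) = O(2^(n/5))`. Summed over `n ≤ N`, the main terms add up exactly to the
stated expression plus `5`, and the errors to a geometric series of ratio `2^(1/5)`.
-/

open Finset ArithmeticFunction
open scoped ArithmeticFunction.Moebius

lemma card_powerset_filter_nonempty {α : Type*} [DecidableEq α] (s : Finset α) :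
    #{A ∈ s.powerset | A.Nonempty} = 2 ^ #s - 1 := by
  rw [← card_powerset, ← card_erase_of_mem (empty_mem_powerset s), ← filter_ne']
  simp only [nonempty_iff_ne_empty]

lemma card_powerset_filter_nonempty_dvd_gcd (s : Finset ℕ) (d : ℕ) :
    #{A ∈ s.powerset | A.Nonempty ∧ d ∣ A.gcd id} = 2 ^ #{x ∈ s | d ∣ x} - 1 := by
  rw [← card_powerset_filter_nonempty]
  congr 1
  ext A
  simp only [mem_filter, mem_powerset, Finset.dvd_gcd_iff, id, subset_iff]
  grind

lemma card_filter_Icc_dvd (n d : ℕ) : #{x ∈ Icc 1 n | d ∣ x} = n / d :=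
  Nat.Ioc_filter_dvd_card_eq_div n d

lemma sum_Icc_moebius_dvd {g M : ℕ} (hg : 0 < g) (hgM : g ≤ M) :
    ∑ d ∈ Icc 1 M, (if d ∣ g then μ d else 0) = if g = 1 then 1 else 0 := by
  have hdivisors : {d ∈ Icc 1 M | d ∣ g} = g.divisors := by
    ext d
    simp only [mem_filter, mem_Icc, Nat.mem_divisors]
    constructor
    · rintro ⟨-, hd⟩
      exact ⟨hd, hg.ne'⟩
    · rintro ⟨hd, -⟩
      exact ⟨⟨Nat.pos_of_dvd_of_pos hd hg, (Nat.le_of_dvd hg hd).trans hgM⟩, hd⟩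
  rw [← sum_filter, hdivisors, ← coe_mul_zeta_apply, moebius_mul_coe_zeta, one_apply]

lemma f_eq_sum_moebius {n M : ℕ} (hnM : n ≤ M) :
    (f n : ℤ) = ∑ d ∈ Icc 1 M, μ d * (2 ^ (n / d) - 1) := by
  set P := (Icc 1 n).powerset
  have hgcd : ∀ A ∈ {A ∈ P | A.Nonempty}, 0 < A.gcd id ∧ A.gcd id ≤ M := by
    intro A hA
    obtain ⟨hAn, a, ha⟩ := mem_filter.1 hA
    have ha' := mem_Icc.1 (mem_powerset.1 hAn ha)
    have hdvd : A.gcd id ∣ a := gcd_dvd ha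
    exact ⟨Nat.pos_of_dvd_of_pos hdvd ha'.1, (Nat.le_of_dvd ha'.1 hdvd).trans (ha'.2.trans hnM)⟩
  calc (f n : ℤ) = ∑ A ∈ {A ∈ P | A.Nonempty}, if A.gcd id = 1 then 1 else 0 := by
        rw [sum_boole, filter_filter]
        rfl
    _ = ∑ A ∈ {A ∈ P | A.Nonempty}, ∑ d ∈ Icc 1 M, if d ∣ A.gcd id then μ d else 0 :=
        sum_congr rfl fun A hA => (sum_Icc_moebius_dvd (hgcd A hA).1 (hgcd A hA).2).symm
    _ = ∑ d ∈ Icc 1 M, μ d * #{A ∈ P | A.Nonempty ∧ d ∣ A.gcd id} := by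
        rw [sum_comm]
        refine sum_congr rfl fun d _ => ?_
        rw [← sum_filter, sum_const, filter_filter, nsmul_eq_mul, mul_comm]
    _ = ∑ d ∈ Icc 1 M, μ d * (2 ^ (n / d) - 1) := by
        simp only [P, card_powerset_filter_nonempty_dvd_gcd, card_filter_Icc_dvd]
        push_cast [Nat.one_le_two_pow]
        rfl

lemma abs_sum_Ioc_moebius_mul_le (n k M : ℕ) :
    |∑ d ∈ Ioc k M, μ d * (2 ^ (n / d) - 1 : ℤ)| ≤ (M - k : ℕ) * 2 ^ (n / (k + 1)) := by
  have hterm : ∀ d ∈ Ioc k M, |μ d * (2 ^ (n / d) - 1 : ℤ)| ≤ 2 ^ (n / (k + 1)) := by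
    intro d hd
    have hexp : n / d ≤ n / (k + 1) := Nat.div_le_div_left (mem_Ioc.1 hd).1 k.succ_pos
    have hpow : (1 : ℤ) ≤ 2 ^ (n / d) := one_le_pow₀ one_le_two
    calc |μ d * (2 ^ (n / d) - 1 : ℤ)| ≤ 1 * (2 ^ (n / d) - 1) := by
          rw [abs_mul, abs_of_nonneg (sub_nonneg.2 hpow)]
          exact mul_le_mul_of_nonneg_right abs_moebius_le_one (sub_nonneg.2 hpow)
      _ ≤ 2 ^ (n / (k + 1)) := by
          linarith [pow_le_pow_right₀ (one_le_two (α := ℤ)) hexp]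
  calc |∑ d ∈ Ioc k M, μ d * (2 ^ (n / d) - 1 : ℤ)|
      ≤ ∑ d ∈ Ioc k M, |μ d * (2 ^ (n / d) - 1 : ℤ)| := abs_sum_le_sum_abs _ _
    _ ≤ #(Ioc k M) • 2 ^ (n / (k + 1)) := sum_le_card_nsmul _ _ _ hterm
    _ = (M - k : ℕ) * 2 ^ (n / (k + 1)) := by rw [Nat.card_Ioc, nsmul_eq_mul]

lemma abs_f_sub_le (n : ℕ) :
    |(f n : ℤ) - (2 ^ n - 2 ^ (n / 2) - 2 ^ (n / 3))| ≤ 2 + 2 ^ (n / 5) + n * 2 ^ (n / 6) := by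
  have hhead : ∑ d ∈ Ioc 0 5, μ d * (2 ^ (n / d) - 1 : ℤ) =
      2 ^ n - 2 ^ (n / 2) - 2 ^ (n / 3) - 2 ^ (n / 5) + 2 := by
    have h2 : μ 2 = -1 := moebius_apply_prime Nat.prime_two
    have h3 : μ 3 = -1 := moebius_apply_prime Nat.prime_three
    have h4 : μ 4 = 0 := moebius_eq_zero_of_not_squarefree (by decide)
    have h5 : μ 5 = -1 := moebius_apply_prime Nat.prime_five
    rw [show Ioc 0 5 = {1, 2, 3, 4, 5} by decide]
    simp only [sum_insert, mem_insert, mem_singleton, Nat.reduceEqDiff, or_self, not_false_eq_true,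
      sum_singleton, moebius_apply_one, h2, h3, h4, h5, Nat.div_one]
    ring
  have htail := abs_sum_Ioc_moebius_mul_le n 5 (n + 5)
  have hpow : (1 : ℤ) ≤ 2 ^ (n / 5) := one_le_pow₀ one_le_two
  -- Summing up to `n + 5` rather than `n` keeps the terms `d ≤ 5` explicit even for small `n`.
  rw [f_eq_sum_moebius (M := n + 5) (by omega), show Icc 1 (n + 5) = Ioc 0 (n + 5) from rfl,
    ← sum_Ioc_consecutive _ (Nat.zero_le 5) (by omega : 5 ≤ n + 5), hhead]
  simp only [Nat.add_sub_cancel, Nat.reduceAdd] at htail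
  rw [abs_le] at htail ⊢
  constructor <;> linarith [htail.1, htail.2]

lemma pow_div_le_rpow_div {b : ℝ} (hb : 1 ≤ b) (n k : ℕ) : b ^ (n / k) ≤ b ^ ((n : ℝ) / k) := by
  rw [← Real.rpow_natCast]
  exact Real.rpow_le_rpow_of_exponent_le hb Nat.cast_div_le

lemma log_mul_le_rpow {b : ℝ} (hb : 0 < b) (x : ℝ) : Real.log b * x ≤ b ^ x := by
  rw [Real.rpow_def_of_pos hb]
  linarith [Real.add_one_le_exp (Real.log b * x)]

lemma abs_f_sub_le_rpow (n : ℕ) :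
    |(f n : ℝ) - (2 ^ n - 2 ^ (n / 2) - 2 ^ (n / 3))| ≤
      (3 + 30 / Real.log 2) * 2 ^ ((n : ℝ) / 5) := by
  have hf : |(f n : ℝ) - (2 ^ n - 2 ^ (n / 2) - 2 ^ (n / 3))| ≤
      2 + 2 ^ (n / 5) + n * 2 ^ (n / 6) := by
    exact_mod_cast abs_f_sub_le n
  have hlog : 0 < Real.log 2 := Real.log_pos one_lt_two
  have hone : (1 : ℝ) ≤ 2 ^ ((n : ℝ) / 5) := Real.one_le_rpow one_le_two (by positivity)
  have hfifth : (2 : ℝ) ^ (n / 5) ≤ 2 ^ ((n : ℝ) / 5) := mod_cast pow_div_le_rpow_div one_le_two n 5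
  have hsixth : (n : ℝ) * 2 ^ (n / 6) ≤ 30 / Real.log 2 * 2 ^ ((n : ℝ) / 5) :=
    calc (n : ℝ) * 2 ^ (n / 6) ≤ 30 / Real.log 2 * (Real.log 2 * (n / 30)) * 2 ^ ((n : ℝ) / 6) := by
          have hn : 30 / Real.log 2 * (Real.log 2 * (n / 30)) = (n : ℝ) := by field_simp
          rw [hn]
          gcongr
          exact_mod_cast pow_div_le_rpow_div one_le_two n 6
      _ ≤ 30 / Real.log 2 * 2 ^ ((n : ℝ) / 30) * 2 ^ ((n : ℝ) / 6) := by
          gcongr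
          exact log_mul_le_rpow two_pos _
      _ = 30 / Real.log 2 * 2 ^ ((n : ℝ) / 5) := by
          rw [mul_assoc, ← Real.rpow_add two_pos]
          ring_nf
  linarith

lemma sum_Icc_two_pow_div_add (k N : ℕ) :
    ∑ n ∈ Icc 1 N, 2 ^ (n / k) + (k + 1) = 2 ^ (N / k) * (N % k + k + 1) := by
  induction N with
  | zero => simp
  | succ N ih =>
    rw [sum_Icc_succ_top (by omega), add_right_comm, ih]
    have hN := Nat.div_add_mod N k
    have hN' := Nat.div_add_mod (N + 1) k
    by_cases hdvd : k ∣ N + 1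
    · have hr : N % k + k + 1 = 2 * k := by
        rw [Nat.succ_div_of_dvd hdvd, Nat.mod_eq_zero_of_dvd hdvd, mul_add_one] at hN'
        omega
      rw [Nat.succ_div_of_dvd hdvd, Nat.mod_eq_zero_of_dvd hdvd, hr]
      ring
    · have hr : (N + 1) % k = N % k + 1 := by
        rw [Nat.succ_div_of_not_dvd hdvd] at hN'
        omega
      rw [Nat.succ_div_of_not_dvd hdvd, hr]
      ring

lemma sum_Icc_two_pow_sub_two_pow_div (N : ℕ) :
    ∑ n ∈ Icc 1 N, ((2 : ℝ) ^ n - 2 ^ (n / 2) - 2 ^ (n / 3)) =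
      2 ^ (N + 1) - 2 ^ (N / 2) * ((N : ℝ) - 2 * (N / 2 : ℕ) + 3)
        - 2 ^ (N / 3) * ((N : ℝ) - 3 * (N / 3 : ℕ) + 4) + 5 := by
  have hsum (k : ℕ) : ∑ n ∈ Icc 1 N, (2 : ℝ) ^ (n / k) + (k + 1) =
      2 ^ (N / k) * ((N % k : ℕ) + k + 1) := by
    exact_mod_cast sum_Icc_two_pow_div_add k N
  have hmod (k : ℕ) : ((N % k : ℕ) : ℝ) = N - k * (N / k : ℕ) := by
    rw [eq_sub_iff_add_eq]
    exact_mod_cast Nat.mod_add_div N k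
  have h1 := hsum 1
  simp only [Nat.div_one, Nat.mod_one] at h1
  rw [sum_sub_distrib, sum_sub_distrib]
  linear_combination h1 - hsum 2 - hsum 3 - 2 ^ (N / 2) * hmod 2 - 2 ^ (N / 3) * hmod 3

lemma sum_Icc_pow_le {q : ℝ} (hq : 1 < q) (N : ℕ) :
    ∑ n ∈ Icc 1 N, q ^ n ≤ q / (q - 1) * q ^ N := by
  induction N with
  | zero => simp; positivity
  | succ N ih =>
    rw [sum_Icc_succ_top (by omega)]
    have hstep : q / (q - 1) * q ^ N + q ^ (N + 1) = q / (q - 1) * q ^ (N + 1) := by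
      field_simp [(sub_pos.2 hq).ne']
      ring
    linarith

/-- Partial sum of `f`:
`∑_{n ≤ N} f(n) = 2^{N+1} - 2^{⌊N/2⌋}(N - 2⌊N/2⌋ + 3) - 2^{⌊N/3⌋}(N - 3⌊N/3⌋ + 4) + O(2^{N/5})`. -/
theorem sum_f_asymptotic :
    ∃ C : ℝ, 0 < C ∧ ∀ N : ℕ, 0 < N →
      |(∑ n ∈ Finset.Icc 1 N, (f n : ℝ)) -
        (2 ^ (N + 1) - 2 ^ (N / 2) * ((N : ℝ) - 2 * (N / 2 : ℕ) + 3)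
          - 2 ^ (N / 3) * ((N : ℝ) - 3 * (N / 3 : ℕ) + 4))| ≤
      C * (2 : ℝ) ^ ((N : ℝ) / 5) := by
  set q : ℝ := 2 ^ ((1 : ℝ) / 5)
  have hq : 1 < q := Real.one_lt_rpow one_lt_two (by norm_num)
  have hq_pow (n : ℕ) : (2 : ℝ) ^ ((n : ℝ) / 5) = q ^ n := by
    rw [← Real.rpow_mul_natCast zero_le_two]
    ring_nf
  set K : ℝ := 3 + 30 / Real.log 2
  refine ⟨5 + K * (q / (q - 1)), by positivity, fun N _ => ?_⟩
  calc _ = |∑ n ∈ Icc 1 N, ((f n : ℝ) - (2 ^ n - 2 ^ (n / 2) - 2 ^ (n / 3))) + 5| := by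
        rw [sum_sub_distrib, sum_Icc_two_pow_sub_two_pow_div]
        ring_nf
    _ ≤ ∑ n ∈ Icc 1 N, |(f n : ℝ) - (2 ^ n - 2 ^ (n / 2) - 2 ^ (n / 3))| + 5 :=
        (abs_add_le _ _).trans (by
          rw [abs_of_pos (by norm_num : (0 : ℝ) < 5)]
          gcongr
          exact abs_sum_le_sum_abs _ _)
    _ ≤ ∑ n ∈ Icc 1 N, K * q ^ n + 5 := by
        gcongr with n
        rw [← hq_pow]
        exact abs_f_sub_le_rpow n
    _ ≤ K * (q / (q - 1) * q ^ N) + 5 := by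
        rw [← mul_sum]
        gcongr
        exact sum_Icc_pow_le hq N
    _ ≤ (5 + K * (q / (q - 1))) * 2 ^ ((N : ℝ) / 5) := by
        rw [hq_pow]
        linarith [one_le_pow₀ (n := N) hq.le]
end

section
/- The sequence |∑_{n=1}^{N} f(n) − 2^{N+1}| / 2^{⌊N/2⌋}, restricted to odd positive integers N, tends to 4 as N → ∞. -/
open Finset Filter

/-- number of nonempty subsets of `Icc 1 n` whose gcd is divisible by `d`. -/
lemma card_dvd_subsets (n d : ℕ) :
    (((Finset.Icc 1 n).powerset.filter fun A => A.Nonempty ∧ d ∣ A.gcd id).card)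
      = 2 ^ (n / d) - 1 := by
  have hM : ((Finset.Icc 1 n).filter (fun x => d ∣ x)).card = n / d := by
    rw [show Finset.Icc 1 n = Finset.Ioc 0 n from (Finset.Icc_add_one_left_eq_Ioc 0 n)]
    exact Nat.Ioc_filter_dvd_card_eq_div n d
  have hset : ((Finset.Icc 1 n).powerset.filter fun A => A.Nonempty ∧ d ∣ A.gcd id)
      = (((Finset.Icc 1 n).filter (fun x => d ∣ x)).powerset.filter fun A => A.Nonempty) := by
    ext A
    simp only [mem_filter, mem_powerset, subset_iff, mem_filter]
    constructor
    · rintro ⟨hsub, hne, hdvd⟩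
      exact ⟨fun {x} hx => ⟨hsub hx, (hdvd.trans (Finset.gcd_dvd hx) : d ∣ id x)⟩, hne⟩
    · rintro ⟨hsub, hne⟩
      exact ⟨fun {x} hx => (hsub hx).1, hne,
        Finset.dvd_gcd fun b hb => (hsub hb).2⟩
  rw [hset]
  have : (((Finset.Icc 1 n).filter (fun x => d ∣ x)).powerset.filter fun A => A.Nonempty)
      = (((Finset.Icc 1 n).filter (fun x => d ∣ x)).powerset).erase ∅ := by
    ext A
    simp [Finset.nonempty_iff_ne_empty, and_comm]
  rw [this, Finset.card_erase_of_mem (Finset.empty_mem_powerset _),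
    Finset.card_powerset, hM]


lemma card_nonempty_powerset (n : ℕ) :
    ((Finset.Icc 1 n).powerset.filter fun A => A.Nonempty).card = 2 ^ n - 1 := by
  have := card_dvd_subsets n 1
  simpa using this

lemma f_upper (n : ℕ) : f n + 2 ^ (n / 2) ≤ 2 ^ n := by
  have hdisj : Disjoint
      ((Finset.Icc 1 n).powerset.filter fun A => A.Nonempty ∧ A.gcd id = 1)
      ((Finset.Icc 1 n).powerset.filter fun A => A.Nonempty ∧ 2 ∣ A.gcd id) := by
    rw [Finset.disjoint_left]
    rintro A hA hA2
    simp only [mem_filter] at hA hA2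
    omega
  have hsub : ((Finset.Icc 1 n).powerset.filter fun A => A.Nonempty ∧ A.gcd id = 1)
      ∪ ((Finset.Icc 1 n).powerset.filter fun A => A.Nonempty ∧ 2 ∣ A.gcd id)
      ⊆ (Finset.Icc 1 n).powerset.filter fun A => A.Nonempty := by
    intro A hA
    simp only [mem_union, mem_filter] at hA ⊢
    tauto
  have := Finset.card_le_card hsub
  rw [Finset.card_union_of_disjoint hdisj] at this
  rw [card_nonempty_powerset, card_dvd_subsets] at this
  have h1 : (1:ℕ) ≤ 2 ^ (n/2) := Nat.one_le_two_pow
  have h2 : (1:ℕ) ≤ 2 ^ n := Nat.one_le_two_pow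
  unfold f
  omega

lemma f_lower (n : ℕ) : 2 ^ n ≤ f n + 2 ^ (n / 2) + n * 2 ^ (n / 3) := by
  rcases Nat.lt_or_ge n 2 with hn | hn
  · interval_cases n <;> simp [f] <;> decide
  have hsub : ((Finset.Icc 1 n).powerset.filter fun A => A.Nonempty)
      ⊆ ((Finset.Icc 1 n).powerset.filter fun A => A.Nonempty ∧ A.gcd id = 1)
      ∪ (Finset.Icc 2 n).biUnion (fun d =>
          (Finset.Icc 1 n).powerset.filter fun A => A.Nonempty ∧ d ∣ A.gcd id) := by
    intro A hA
    simp only [mem_filter, mem_powerset] at hA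
    obtain ⟨hAsub, hAne⟩ := hA
    set g := A.gcd id with hg
    rcases eq_or_ne g 1 with h1 | h1
    · simp only [mem_union, mem_filter, mem_powerset]
      exact Or.inl ⟨hAsub, hAne, h1⟩
    · obtain ⟨a, ha⟩ := hAne
      have hamem := hAsub ha
      simp only [Finset.mem_Icc] at hamem
      have hgd : g ∣ a := Finset.gcd_dvd ha
      have hgle : g ≤ n := le_trans (Nat.le_of_dvd (by omega) hgd) hamem.2
      have hg0 : g ≠ 0 := by
        intro h0
        have := Finset.gcd_eq_zero_iff.mp (hg ▸ h0) a ha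
        simp at this; omega
      simp only [mem_union, mem_filter, mem_powerset, Finset.mem_biUnion]
      refine Or.inr ⟨g, ?_, hAsub, ⟨a, ha⟩, dvd_refl _⟩
      rw [Finset.mem_Icc]
      omega
  have hcard := Finset.card_le_card hsub
  have hunion := Finset.card_union_le
    ((Finset.Icc 1 n).powerset.filter fun A => A.Nonempty ∧ A.gcd id = 1)
    ((Finset.Icc 2 n).biUnion (fun d =>
      (Finset.Icc 1 n).powerset.filter fun A => A.Nonempty ∧ d ∣ A.gcd id))
  have hbi := Finset.card_biUnion_le (s := Finset.Icc 2 n)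
    (t := fun d => (Finset.Icc 1 n).powerset.filter fun A => A.Nonempty ∧ d ∣ A.gcd id)
  have hsum : ∑ d ∈ Finset.Icc 2 n,
      ((Finset.Icc 1 n).powerset.filter fun A => A.Nonempty ∧ d ∣ A.gcd id).card
      ≤ (2 ^ (n/2) - 1) + (n - 2) * 2 ^ (n / 3) := by
    rw [show Finset.Icc 2 n = insert 2 (Finset.Icc 3 n) by
      ext x; simp only [Finset.mem_Icc, Finset.mem_insert]; omega]
    rw [Finset.sum_insert (by simp)]
    gcongr
    · rw [card_dvd_subsets]
    · calc ∑ d ∈ Finset.Icc 3 n,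
          ((Finset.Icc 1 n).powerset.filter fun A => A.Nonempty ∧ d ∣ A.gcd id).card
          ≤ ∑ d ∈ Finset.Icc 3 n, 2 ^ (n / 3) := by
            apply Finset.sum_le_sum
            intro d hd
            rw [card_dvd_subsets]
            have : n / d ≤ n / 3 := Nat.div_le_div_left (by simp at hd; omega) (by omega)
            calc 2 ^ (n/d) - 1 ≤ 2 ^ (n/d) := Nat.sub_le _ _
              _ ≤ 2 ^ (n/3) := Nat.pow_le_pow_right (by omega) this
        _ = (n - 2) * 2 ^ (n/3) := by
            rw [Finset.sum_const, Nat.card_Icc, smul_eq_mul,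
              show n + 1 - 3 = n - 2 by omega]
  rw [card_nonempty_powerset] at hcard
  have h1 : (1:ℕ) ≤ 2 ^ (n/2) := Nat.one_le_two_pow
  have hfn : f n = ((Finset.Icc 1 n).powerset.filter fun A => A.Nonempty ∧ A.gcd id = 1).card := rfl
  have hle : (n - 2) * 2 ^ (n/3) ≤ n * 2 ^ (n/3) := Nat.mul_le_mul_right _ (by omega)
  omega


lemma sum_pow2 (N : ℕ) : ∑ n ∈ Finset.Icc 1 N, (2:ℝ) ^ n = 2 ^ (N+1) - 2 := by
  induction N with
  | zero => simp
  | succ N ih =>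
    rw [Finset.sum_Icc_succ_top (by omega), ih]
    ring

lemma sum_pow2_half (m : ℕ) :
    ∑ n ∈ Finset.Icc 1 (2*m+1), (2:ℝ) ^ (n / 2) = 4 * 2 ^ m - 3 := by
  induction m with
  | zero => norm_num
  | succ m ih =>
    rw [show 2*(m+1)+1 = (2*m+2)+1 by ring, Finset.sum_Icc_succ_top (by omega),
      show (2*m+2) = (2*m+1)+1 by ring, Finset.sum_Icc_succ_top (by omega), ih,
      show ((2*m+1)+1)/2 = m+1 by omega, show ((2*m+1)+1+1)/2 = m+1 by omega]
    ring

-- tail bound tendsto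
lemma tail_tendsto :
    Tendsto (fun N : ℕ => (1 + (N:ℝ)^2 * 2 ^ (N/3)) / 2 ^ (N/2)) atTop (nhds 0) := by
  have hr : (1:ℝ) < 2 ^ ((8:ℝ)⁻¹) := by
    apply Real.one_lt_rpow_iff_of_pos (by norm_num) |>.mpr
    norm_num
  set r : ℝ := 2 ^ ((8:ℝ)⁻¹) with hrdef
  have hbound : ∀ N : ℕ, (1 + (N:ℝ)^2 * 2 ^ (N/3)) / 2 ^ (N/2)
      ≤ 2 ^ ((7:ℝ)/8) * (((N:ℝ)^0 / r ^ N) + ((N:ℝ)^2 / r ^ N)) := by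
    intro N
    have h1 : (1 + (N:ℝ)^2 * 2 ^ (N/3)) / 2 ^ (N/2)
        ≤ (1 + (N:ℝ)^2) / 2 ^ (N/8) := by
      have hfloor : N/3 + N/8 ≤ N/2 := by omega
      have hpow : (2:ℝ) ^ (N/3) * 2 ^ (N/8) ≤ 2 ^ (N/2) := by
        rw [← pow_add]
        exact pow_le_pow_right₀ (by norm_num) hfloor
      rw [div_le_div_iff₀ (by positivity) (by positivity)]
      calc (1 + (N:ℝ)^2 * 2 ^ (N/3)) * 2 ^ (N/8)
          ≤ ((1 + (N:ℝ)^2) * 2 ^ (N/3)) * 2 ^ (N/8) := by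
            have h2 : (1:ℝ) ≤ 2 ^ (N/3) := one_le_pow₀ (by norm_num)
            have h3 : (1 + (N:ℝ)^2 * 2 ^ (N/3)) ≤ (1 + (N:ℝ)^2) * 2 ^ (N/3) := by
              nlinarith [sq_nonneg (N:ℝ)]
            exact mul_le_mul_of_nonneg_right h3 (by positivity)
        _ = (1 + (N:ℝ)^2) * (2 ^ (N/3) * 2 ^ (N/8)) := by ring
        _ ≤ (1 + (N:ℝ)^2) * 2 ^ (N/2) := by
            apply mul_le_mul_of_nonneg_left hpow; positivity
    have h2 : (2:ℝ) ^ ((7:ℝ)/8) * 2 ^ (N/8) ≥ r ^ N := by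
      have : (2:ℝ) ^ (N/8 : ℕ) = (2:ℝ) ^ ((N/8 : ℕ) : ℝ) := by
        rw [Real.rpow_natCast]
      rw [this, ← Real.rpow_add (by norm_num)]
      have hrN : r ^ N = (2:ℝ) ^ ((N:ℝ) * 8⁻¹) := by
        rw [hrdef, ← Real.rpow_natCast (2 ^ ((8:ℝ)⁻¹)) N, ← Real.rpow_mul (by norm_num)]
        ring_nf
      rw [hrN]
      apply Real.rpow_le_rpow_left_iff (by norm_num) |>.mpr
      have hnat : N ≤ 8 * (N/8) + 7 := by omega
      have : (N:ℝ) ≤ 8 * ((N/8 : ℕ) : ℝ) + 7 := by exact_mod_cast hnat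
      linarith
    calc (1 + (N:ℝ)^2 * 2 ^ (N/3)) / 2 ^ (N/2) ≤ (1 + (N:ℝ)^2) / 2 ^ (N/8) := h1
      _ ≤ (1 + (N:ℝ)^2) / (r ^ N / 2 ^ ((7:ℝ)/8)) := by
          apply div_le_div_of_nonneg_left (by positivity) (by positivity)
          rw [div_le_iff₀ (by positivity)]
          linarith [h2]
        _ = 2 ^ ((7:ℝ)/8) * (((N:ℝ)^0 / r ^ N) + ((N:ℝ)^2 / r ^ N)) := by
          rw [div_div_eq_mul_div]
          field_simp
  have hlim : Tendsto (fun N : ℕ => 2 ^ ((7:ℝ)/8) * (((N:ℝ)^0 / r ^ N) + ((N:ℝ)^2 / r ^ N)))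
      atTop (nhds 0) := by
    have := (tendsto_pow_const_div_const_pow_of_one_lt 0 hr).add
      (tendsto_pow_const_div_const_pow_of_one_lt 2 hr)
    simpa using this.const_mul (2 ^ ((7:ℝ)/8))
  apply squeeze_zero (fun N => by positivity) hbound hlim


lemma key_bound (N : ℕ) (hN : Odd N) :
    |(|(∑ n ∈ Finset.Icc 1 N, (f n : ℝ)) - 2 ^ (N + 1)| / 2 ^ (N / 2)) - 4|
      ≤ (1 + (N:ℝ)^2 * 2 ^ (N/3)) / 2 ^ (N/2) := by
  obtain ⟨m, hm⟩ := hN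
  have hdiv : N / 2 = m := by omega
  set A : ℝ := (∑ n ∈ Finset.Icc 1 N, (f n : ℝ)) - 2 ^ (N + 1) with hA
  have hk : (2:ℝ) ^ (N/2) = 2 ^ m := by rw [hdiv]
  -- upper bound on sum of f
  have hup : ∑ n ∈ Finset.Icc 1 N, (f n : ℝ)
      ≤ ∑ n ∈ Finset.Icc 1 N, ((2:ℝ)^n - 2^(n/2)) := by
    apply Finset.sum_le_sum
    intro n _
    have := f_upper n
    have : (f n : ℝ) + 2 ^ (n/2) ≤ 2 ^ n := by exact_mod_cast this
    linarith
  have hlo : ∑ n ∈ Finset.Icc 1 N, ((2:ℝ)^n - 2^(n/2) - n * 2^(n/3))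
      ≤ ∑ n ∈ Finset.Icc 1 N, (f n : ℝ) := by
    apply Finset.sum_le_sum
    intro n _
    have := f_lower n
    have : (2:ℝ) ^ n ≤ (f n : ℝ) + 2 ^ (n/2) + n * 2 ^ (n/3) := by exact_mod_cast this
    linarith
  have hsplit : ∑ n ∈ Finset.Icc 1 N, ((2:ℝ)^n - 2^(n/2))
      = 2 ^ (N+1) - 2 - (4 * 2 ^ m - 3) := by
    rw [Finset.sum_sub_distrib, sum_pow2, hm, sum_pow2_half]
  have herr : ∑ n ∈ Finset.Icc 1 N, ((n:ℝ) * 2^(n/3)) ≤ (N:ℝ)^2 * 2^(N/3) := by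
    calc ∑ n ∈ Finset.Icc 1 N, ((n:ℝ) * 2^(n/3))
        ≤ ∑ n ∈ Finset.Icc 1 N, ((N:ℝ) * 2^(N/3)) := by
          apply Finset.sum_le_sum
          intro n hn
          simp only [Finset.mem_Icc] at hn
          have h1 : (n:ℝ) ≤ N := by exact_mod_cast hn.2
          have h2 : (2:ℝ)^(n/3) ≤ 2^(N/3) :=
            pow_le_pow_right₀ (by norm_num) (Nat.div_le_div_right hn.2)
          exact mul_le_mul h1 h2 (by positivity) (by positivity)
      _ = (N:ℝ) * ((N:ℝ) * 2^(N/3)) := by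
          rw [Finset.sum_const, Nat.card_Icc, show N + 1 - 1 = N by omega, nsmul_eq_mul]
      _ = (N:ℝ)^2 * 2^(N/3) := by ring
  have hsum_sub : ∑ n ∈ Finset.Icc 1 N, ((2:ℝ)^n - 2^(n/2) - n * 2^(n/3))
      = (2 ^ (N+1) - 2 - (4 * 2 ^ m - 3)) - ∑ n ∈ Finset.Icc 1 N, ((n:ℝ) * 2^(n/3)) := by
    rw [Finset.sum_sub_distrib, hsplit]
  have habs : |A + 4 * 2 ^ m| ≤ 1 + (N:ℝ)^2 * 2^(N/3) := by
    rw [abs_le]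
    constructor
    · rw [hsum_sub] at hlo
      simp only [hA]
      linarith
    · rw [hsplit] at hup
      simp only [hA]
      linarith
  have hpos : (0:ℝ) < 2 ^ m := by positivity
  have step1 : |A| / 2 ^ (N/2) - 4 = (|A| - 4 * 2 ^ m) / 2 ^ m := by
    rw [hk]; field_simp
  have h4 : |(|A| - 4 * 2 ^ m)| ≤ |A + 4 * 2 ^ m| := by
    have h := abs_abs_sub_abs_le_abs_sub A (-(4 * 2 ^ m))
    rw [abs_neg, sub_neg_eq_add, abs_of_pos (show (0:ℝ) < 4 * 2 ^ m by positivity)] at h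
    exact h
  rw [step1, abs_div, abs_of_pos hpos, hdiv]
  gcongr
  exact h4.trans habs

/-- Along odd `N`, `|∑_{n ≤ N} f(n) - 2^{N+1}| / 2^{⌊N/2⌋} → 4`. -/
theorem tendsto_f_error_odd :
    Filter.Tendsto
      (fun N : ℕ => |(∑ n ∈ Finset.Icc 1 N, (f n : ℝ)) - 2 ^ (N + 1)| / 2 ^ (N / 2))
      (Filter.atTop ⊓ Filter.principal {N : ℕ | Odd N}) (nhds 4) := by
  rw [← tendsto_sub_nhds_zero_iff]
  apply squeeze_zero_norm' (a := fun N : ℕ => (1 + (N:ℝ)^2 * 2 ^ (N/3)) / 2 ^ (N/2))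
  · rw [Filter.eventually_inf_principal]
    exact Filter.Eventually.of_forall fun N hN => key_bound N hN
  · exact tail_tendsto.mono_left inf_le_left
end

section
/- The sequence |∑_{n=1}^{N} Φ(n) − 2^{N+1}| / 2^{⌊N/2⌋} tends to 2 as N → ∞. -/
open Finset Filter


lemma Phi_L0 (n d : ℕ) :
    (((Finset.Icc 1 n).powerset.filter fun A => A.Nonempty ∧ ∀ a ∈ A, d ∣ a).card)
      = 2 ^ (n / d) - 1 := by
  have h1 : ((Finset.Icc 1 n).powerset.filter fun A => A.Nonempty ∧ ∀ a ∈ A, d ∣ a)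
      = ((Finset.Icc 1 n).filter fun x => d ∣ x).powerset.filter fun A => A.Nonempty := by
    ext A
    simp only [mem_filter, mem_powerset, subset_iff, mem_filter]
    constructor
    · rintro ⟨hsub, hne, hdvd⟩
      exact ⟨fun x hx => ⟨hsub hx, hdvd x hx⟩, hne⟩
    · rintro ⟨hsub, hne⟩
      exact ⟨fun x hx => (hsub hx).1, hne, fun x hx => (hsub hx).2⟩
  rw [h1]
  have h2 : (((Finset.Icc 1 n).filter fun x => d ∣ x).powerset.filter fun A => A.Nonempty)
      = ((Finset.Icc 1 n).filter fun x => d ∣ x).powerset.erase ∅ := by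
    ext A
    simp [Finset.nonempty_iff_ne_empty, and_comm]
  rw [h2, card_erase_of_mem (by simp), card_powerset]
  have h3 : Finset.Icc 1 n = Finset.Ioc 0 n := rfl
  rw [h3, Nat.Ioc_filter_dvd_card_eq_div]

lemma Phi_L1 {n : ℕ} (hn : 0 < n) :
    (Phi n : ℤ) = ∑ d ∈ n.divisors,
      ArithmeticFunction.moebius d * (2 ^ (n / d) - 1) := by
  classical
  set P := (Finset.Icc 1 n).powerset.filter (fun A => A.Nonempty) with hP
  have step1 : (Phi n : ℤ) = ∑ A ∈ P, if (insert n A).gcd id = 1 then (1:ℤ) else 0 := by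
    rw [hP, Finset.sum_filter]
    simp only [← ite_and]
    rw [Phi, Finset.card_filter]
    push_cast
    rfl
  have hgdvd : ∀ A : Finset ℕ, (insert n A).gcd id ∣ n := fun A =>
    Finset.gcd_dvd (Finset.mem_insert_self n A)
  have step2 : ∀ A ∈ P, (if (insert n A).gcd id = 1 then (1:ℤ) else 0)
      = ∑ d ∈ n.divisors.filter (fun d => d ∣ (insert n A).gcd id),
          ArithmeticFunction.moebius d := by
    intro A _
    rw [Nat.divisors_filter_dvd_of_dvd hn.ne' (hgdvd A)]
    have := congrArg (fun f : ArithmeticFunction ℤ => f ((insert n A).gcd id))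
      ArithmeticFunction.moebius_mul_coe_zeta
    simp only [ArithmeticFunction.coe_mul_zeta_apply, ArithmeticFunction.one_apply] at this
    rw [this]
  rw [step1, Finset.sum_congr rfl step2]
  simp_rw [Finset.sum_filter]
  rw [Finset.sum_comm]
  refine Finset.sum_congr rfl fun d hd => ?_
  have hdn : d ∣ n := (Nat.mem_divisors.mp hd).1
  have key : ∀ A ∈ P, (if d ∣ (insert n A).gcd id then (ArithmeticFunction.moebius d : ℤ) else 0)
      = if ∀ a ∈ A, d ∣ a then (ArithmeticFunction.moebius d : ℤ) else 0 := by
    intro A _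
    refine if_congr ?_ rfl rfl
    rw [Finset.dvd_gcd_iff]
    simp only [Finset.mem_insert, id]
    constructor
    · intro h a ha; exact h a (Or.inr ha)
    · rintro h a (rfl | ha); exacts [hdn, h a ha]
  rw [Finset.sum_congr rfl key, ← Finset.sum_filter, Finset.sum_const, hP,
    Finset.filter_filter, Phi_L0 n d, nsmul_eq_mul, mul_comm]
  have h1 : (1:ℕ) ≤ 2 ^ (n / d) := Nat.one_le_two_pow
  push_cast [h1]
  ring

lemma Phi_L2 (N : ℕ) (f : ℕ → ℕ → ℤ) :
    ∑ n ∈ Finset.Icc 1 N, ∑ d ∈ n.divisors, f d (n / d)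
      = ∑ d ∈ Finset.Icc 1 N, ∑ m ∈ Finset.Icc 1 (N / d), f d m := by
  rw [Finset.sum_sigma', Finset.sum_sigma']
  refine Finset.sum_nbij' (fun p => ⟨p.2, p.1 / p.2⟩) (fun p => ⟨p.1 * p.2, p.1⟩)
    ?_ ?_ ?_ ?_ ?_
  · rintro ⟨n, d⟩ h
    simp only [Finset.mem_sigma, Finset.mem_Icc, Nat.mem_divisors] at h ⊢
    obtain ⟨⟨h1, h2⟩, hd, hn0⟩ := h
    have hd0 : 0 < d := Nat.pos_of_dvd_of_pos hd (by omega)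
    refine ⟨⟨hd0, le_trans (Nat.le_of_dvd (by omega) hd) h2⟩,
      Nat.one_le_div_iff hd0 |>.mpr (Nat.le_of_dvd (by omega) hd), Nat.div_le_div_right h2⟩
  · rintro ⟨d, m⟩ h
    simp only [Finset.mem_sigma, Finset.mem_Icc, Nat.mem_divisors] at h ⊢
    obtain ⟨⟨h1, h2⟩, hm1, hm2⟩ := h
    have : d * m ≤ N := le_trans (Nat.mul_le_mul_left d hm2) (Nat.mul_div_le N d)
    exact ⟨⟨Nat.one_le_iff_ne_zero.mpr (by positivity), this⟩, ⟨m, rfl⟩, by positivity⟩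
  · rintro ⟨n, d⟩ h
    simp only [Finset.mem_sigma, Finset.mem_Icc, Nat.mem_divisors] at h
    obtain ⟨⟨h1, h2⟩, hd, hn0⟩ := h
    simp [Nat.mul_div_cancel' hd]
  · rintro ⟨d, m⟩ h
    simp only [Finset.mem_sigma, Finset.mem_Icc] at h
    have hd0 : 0 < d := by omega
    simp [Nat.mul_div_cancel_left m hd0]
  · rintro ⟨n, d⟩ h
    rfl

lemma Phi_L3 (k : ℕ) : ∑ m ∈ Finset.Icc 1 k, ((2:ℤ) ^ m - 1) = 2 ^ (k + 1) - 2 - k := by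
  induction k with
  | zero => simp
  | succ k ih =>
    rw [Finset.sum_Icc_succ_top (by omega), ih]
    push_cast
    ring

lemma Phi_L4 (N : ℕ) : ∑ n ∈ Finset.Icc 1 N, (Phi n : ℤ)
    = ∑ d ∈ Finset.Icc 1 N,
        ArithmeticFunction.moebius d * (2 ^ (N / d + 1) - 2 - ((N / d : ℕ) : ℤ)) := by
  have h : ∀ n ∈ Finset.Icc 1 N, (Phi n : ℤ) = ∑ d ∈ n.divisors,
      ArithmeticFunction.moebius d * (2 ^ (n / d) - 1) := by
    intro n hn
    exact Phi_L1 (by simp at hn; omega)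
  rw [Finset.sum_congr rfl h, Phi_L2 N (fun d m => ArithmeticFunction.moebius d * (2 ^ m - 1))]
  refine Finset.sum_congr rfl fun d _ => ?_
  rw [← Finset.mul_sum, Phi_L3]
lemma Phi_L5 {N : ℕ} (hN : 2 ≤ N) :
    |(∑ n ∈ Finset.Icc 1 N, (Phi n : ℤ)) - 2 ^ (N + 1) + 2 ^ (N / 2 + 1)|
      ≤ ((N : ℤ) + 2) ^ 2 * 2 ^ (N / 3 + 1) := by
  rw [Phi_L4]
  have hsplit : Finset.Icc 1 N = insert 1 (insert 2 (Finset.Icc 3 N)) := by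
    ext x; simp only [Finset.mem_Icc, Finset.mem_insert]; omega
  have h1 : (1 : ℕ) ∉ insert 2 (Finset.Icc 3 N) := by simp
  have h2 : (2 : ℕ) ∉ Finset.Icc 3 N := by simp
  rw [hsplit, Finset.sum_insert h1, Finset.sum_insert h2,
    ArithmeticFunction.moebius_apply_one,
    ArithmeticFunction.moebius_apply_prime Nat.prime_two]
  simp only [Nat.div_one]
  have hT : |∑ d ∈ Finset.Icc 3 N,
      ArithmeticFunction.moebius d * (2 ^ (N / d + 1) - 2 - ((N / d : ℕ) : ℤ))|
      ≤ (N : ℤ) * (2 ^ (N / 3 + 1) + N + 2) := by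
    calc |∑ d ∈ Finset.Icc 3 N,
        ArithmeticFunction.moebius d * (2 ^ (N / d + 1) - 2 - ((N / d : ℕ) : ℤ))|
        ≤ ∑ d ∈ Finset.Icc 3 N,
          |ArithmeticFunction.moebius d * (2 ^ (N / d + 1) - 2 - ((N / d : ℕ) : ℤ))| :=
          Finset.abs_sum_le_sum_abs _ _
      _ ≤ ∑ _d ∈ Finset.Icc 3 N, ((2:ℤ) ^ (N / 3 + 1) + N + 2) := by
          refine Finset.sum_le_sum fun d hd => ?_
          simp only [Finset.mem_Icc] at hd
          have hdiv : N / d ≤ N / 3 := Nat.div_le_div_left hd.1 (by norm_num)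
          have hdivN : N / d ≤ N := Nat.div_le_self N d
          rw [abs_mul]
          have hmu : |(ArithmeticFunction.moebius d : ℤ)| ≤ 1 :=
            ArithmeticFunction.abs_moebius_le_one
          have hpow : (2:ℤ) ^ (N / d + 1) ≤ 2 ^ (N / 3 + 1) :=
            pow_le_pow_right₀ (by norm_num) (by omega)
          have hb : |(2:ℤ) ^ (N / d + 1) - 2 - ((N / d : ℕ) : ℤ)|
              ≤ 2 ^ (N / 3 + 1) + N + 2 := by
            rw [abs_le]
            constructor
            · have h0 : (0:ℤ) ≤ 2 ^ (N / d + 1) := by positivity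
              have h2 : ((N / d : ℕ) : ℤ) ≤ N := by exact_mod_cast hdivN
              have h3 : (0:ℤ) ≤ 2 ^ (N / 3 + 1) := by positivity
              omega
            · have h2 : (0:ℤ) ≤ ((N / d : ℕ) : ℤ) := by positivity
              omega
          calc |(ArithmeticFunction.moebius d : ℤ)|
                * |(2:ℤ) ^ (N / d + 1) - 2 - ((N / d : ℕ) : ℤ)|
                ≤ 1 * ((2:ℤ) ^ (N / 3 + 1) + N + 2) :=
                mul_le_mul hmu hb (abs_nonneg _) zero_le_one
            _ = _ := one_mul _
      _ = (Finset.Icc 3 N).card * ((2:ℤ) ^ (N / 3 + 1) + N + 2) := by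
          rw [Finset.sum_const, nsmul_eq_mul]
      _ ≤ (N : ℤ) * (2 ^ (N / 3 + 1) + N + 2) := by
          have hc : (Finset.Icc 3 N).card ≤ N := by
            rw [Nat.card_Icc]; omega
          have hpos : (0:ℤ) ≤ 2 ^ (N / 3 + 1) + N + 2 := by positivity
          exact mul_le_mul_of_nonneg_right (by exact_mod_cast hc) hpos
  have hhalf : ((N / 2 : ℕ) : ℤ) ≤ N := by exact_mod_cast Nat.div_le_self N 2
  have hhalf0 : (0:ℤ) ≤ ((N / 2 : ℕ) : ℤ) := by positivity
  have hN' : (0:ℤ) ≤ N := by positivity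
  have hX : (2:ℤ) ≤ 2 ^ (N / 3 + 1) := by
    calc (2:ℤ) = 2 ^ 1 := (pow_one 2).symm
    _ ≤ 2 ^ (N / 3 + 1) := pow_le_pow_right₀ (by norm_num) (by omega)
  have habs := abs_le.mp hT
  rw [abs_le]
  constructor <;>
    nlinarith [habs.1, habs.2, sq_nonneg ((N:ℤ)), mul_nonneg hN' (sub_nonneg.mpr hX),
      mul_nonneg (mul_nonneg hN' hN') (sub_nonneg.mpr hX)]
lemma base_lim : Tendsto (fun k : ℕ => 98 * ((k : ℝ) + 1) ^ 2 / 2 ^ k) atTop (nhds 0) := by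
  have h0 : Tendsto (fun n : ℕ => ((n : ℝ)) ^ 2 * (1/2 : ℝ) ^ n) atTop (nhds 0) := by
    have hs := summable_pow_mul_geometric_of_norm_lt_one (R := ℝ) 2
      (r := 1/2) (by rw [Real.norm_eq_abs, abs_of_pos] <;> norm_num)
    simpa using hs.tendsto_atTop_zero
  have h1 : Tendsto (fun k : ℕ => (((k+1 : ℕ) : ℝ)) ^ 2 * (1/2 : ℝ) ^ (k+1)) atTop (nhds 0) :=
    h0.comp (tendsto_add_atTop_nat 1)
  have h2 := h1.const_mul (196 : ℝ)
  rw [mul_zero] at h2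
  refine h2.congr fun k => ?_
  push_cast
  rw [div_pow, one_pow]
  have : (2:ℝ) ^ (k+1) ≠ 0 := by positivity
  field_simp
  ring

lemma Phi_div6_tendsto : Filter.Tendsto (fun N : ℕ => N / 6) Filter.atTop Filter.atTop :=
  Filter.tendsto_atTop_atTop.mpr fun b => ⟨6 * b, fun a ha => by omega⟩

lemma Phi_L5R {N : ℕ} (hN : 2 ≤ N) :
    |(∑ n ∈ Finset.Icc 1 N, (Phi n : ℝ)) - 2 ^ (N + 1) + 2 ^ (N / 2 + 1)|
      ≤ ((N : ℝ) + 2) ^ 2 * 2 ^ (N / 3 + 1) := by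
  have h := Phi_L5 hN
  exact_mod_cast h

/-- `|∑_{n ≤ N} Φ(n) - 2^{N+1}| / 2^{⌊N/2⌋} → 2`. -/
theorem tendsto_Phi_error :
    Filter.Tendsto
      (fun N : ℕ => |(∑ n ∈ Finset.Icc 1 N, (Phi n : ℝ)) - 2 ^ (N + 1)| / 2 ^ (N / 2))
      Filter.atTop (nhds 2) := by
  set S : ℕ → ℝ := fun N => ∑ n ∈ Finset.Icc 1 N, (Phi n : ℝ) with hS
  set f : ℕ → ℝ := fun N => (S N - 2 ^ (N + 1) + 2 ^ (N / 2 + 1)) / 2 ^ (N / 2) with hf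
  have hfzero : Filter.Tendsto f Filter.atTop (nhds 0) := by
    apply squeeze_zero_norm' (a := fun N : ℕ => 98 * (((N / 6 : ℕ) : ℝ) + 1) ^ 2 / 2 ^ (N / 6))
    · filter_upwards [Filter.eventually_ge_atTop 2] with N hN
      have h2pos : (0:ℝ) < 2 ^ (N / 2) := by positivity
      have hb := Phi_L5R hN
      have hA : ((N : ℝ) + 2) ^ 2 ≤ 49 * (((N / 6 : ℕ) : ℝ) + 1) ^ 2 := by
        have hk : (N : ℝ) ≤ 6 * ((N / 6 : ℕ) : ℝ) + 5 := by
          exact_mod_cast (by omega : N ≤ 6 * (N / 6) + 5)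
        nlinarith [Nat.cast_nonneg (α := ℝ) (N / 6)]
      have hB : (2:ℝ) ^ (N / 3 + 1) * 2 ^ (N / 6) ≤ 2 * 2 ^ (N / 2) := by
        rw [← pow_add]
        have h21 : (2:ℝ) * 2 ^ (N / 2) = 2 ^ (N / 2 + 1) := by rw [pow_succ]; ring
        rw [h21]
        exact pow_le_pow_right₀ one_le_two (by omega)
      have step : ((N : ℝ) + 2) ^ 2 * 2 ^ (N / 3 + 1) / 2 ^ (N / 2)
          ≤ 98 * (((N / 6 : ℕ) : ℝ) + 1) ^ 2 / 2 ^ (N / 6) := by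
        rw [div_le_div_iff₀ h2pos (by positivity)]
        calc ((N : ℝ) + 2) ^ 2 * 2 ^ (N / 3 + 1) * 2 ^ (N / 6)
            = ((N : ℝ) + 2) ^ 2 * (2 ^ (N / 3 + 1) * 2 ^ (N / 6)) := by ring
          _ ≤ (49 * (((N / 6 : ℕ) : ℝ) + 1) ^ 2) * (2 * 2 ^ (N / 2)) :=
              mul_le_mul hA hB (by positivity) (by positivity)
          _ = 98 * (((N / 6 : ℕ) : ℝ) + 1) ^ 2 * 2 ^ (N / 2) := by ring
      have : ‖f N‖ = |S N - 2 ^ (N + 1) + 2 ^ (N / 2 + 1)| / 2 ^ (N / 2) := by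
        rw [hf, Real.norm_eq_abs, abs_div, abs_of_pos h2pos]
      rw [this]
      exact le_trans (by gcongr) step
    · exact base_lim.comp Phi_div6_tendsto
  have habs : Filter.Tendsto (fun N => |f N - 2|) Filter.atTop (nhds 2) := by
    have := (hfzero.sub_const 2).abs
    simpa using this
  refine habs.congr fun N => ?_
  have h2pos : (0:ℝ) < 2 ^ (N / 2) := by positivity
  have hfe : f N - 2 = (S N - 2 ^ (N + 1)) / 2 ^ (N / 2) := by
    rw [hf]
    field_simp
    ring
  rw [hfe, abs_div, abs_of_pos h2pos]
end

section
/- The sequence |∑_{n=1}^{N} D(n) − 2^{N+1}| / 2^{⌊N/2⌋}, restricted to odd positive integers N, tends to 2 as N → ∞, and restricted to even positive integers N, tends to 1 as N → ∞. -/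
set_option maxHeartbeats 1000000

lemma geom_Ioc (a b : ℕ) (h : a ≤ b) :
    ∑ d ∈ Finset.Ioc a b, (2:ℤ)^d = 2^(b+1) - 2^(a+1) := by
  induction b, h using Nat.le_induction with
  | base => simp
  | succ b hb ih =>
    rw [Finset.sum_Ioc_succ_top (by omega), ih]
    ring

lemma U_formula (M : ℕ) :
    ∑ d ∈ Finset.Ioc 0 M, (2:ℤ)^(d/2) = (if M % 2 = 0 then 3 else 4) * 2^(M/2) - 3 := by
  induction M with
  | zero => simp
  | succ n ih =>
    rw [Finset.sum_Ioc_succ_top (Nat.zero_le n), ih]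
    rcases Nat.mod_two_eq_zero_or_one n with h | h
    · have e1 : (n+1)/2 = n/2 := by omega
      have e2 : (n+1) % 2 = 1 := by omega
      rw [e1, e2, h]; norm_num; ring
    · have e1 : (n+1)/2 = n/2 + 1 := by omega
      have e2 : (n+1) % 2 = 0 := by omega
      rw [e1, e2, h, pow_succ]; norm_num; ring

lemma U_le (M : ℕ) : ∑ d ∈ Finset.Ioc 0 M, (2:ℤ)^(d/2) ≤ 4 * 2^(M/2) := by
  rw [U_formula]
  have : (0:ℤ) < 2^(M/2) := by positivity
  split <;> nlinarith

lemma U_nonneg (M : ℕ) : 0 ≤ ∑ d ∈ Finset.Ioc 0 M, (2:ℤ)^(d/2) :=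
  Finset.sum_nonneg fun d _ => by positivity

lemma V_le (M : ℕ) : ∑ d ∈ Finset.Ioc 0 M, (2:ℤ)^(d/3) ≤ 6 * 2^(M/3) := by
  have key : ∀ M : ℕ, ∑ d ∈ Finset.Ioc 0 M, (2:ℤ)^(d/3)
      ≤ ((4 + M % 3 : ℕ) : ℤ) * 2^(M/3) - 3 := by
    intro M
    induction M with
    | zero => simp
    | succ n ih =>
      rw [Finset.sum_Ioc_succ_top (Nat.zero_le n)]
      push_cast at ih ⊢
      rcases Nat.lt_or_ge (n % 3) 2 with h | h
      · have e1 : (n+1)/3 = n/3 := by omega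
        have e2 : ((n:ℤ)+1) % 3 = (n:ℤ) % 3 + 1 := by omega
        rw [e1, e2]
        nlinarith [ih]
      · have h' : n % 3 = 2 := by omega
        have h'' : (n:ℤ) % 3 = 2 := by omega
        have e1 : (n+1)/3 = n/3 + 1 := by omega
        have e2 : ((n:ℤ)+1) % 3 = 0 := by omega
        rw [e1, e2, pow_succ]
        rw [h''] at ih
        have h2 : (0:ℤ) < 2^(n/3) := by positivity
        nlinarith [ih]
  calc ∑ d ∈ Finset.Ioc 0 M, (2:ℤ)^(d/3) ≤ ((4 + M % 3 : ℕ) : ℤ) * 2^(M/3) - 3 := key M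
    _ ≤ 6 * 2^(M/3) := by
        have h2 : (0:ℤ) < 2^(M/3) := by positivity
        have h6 : ((4 + M % 3 : ℕ) : ℤ) ≤ 6 := by push_cast; omega
        nlinarith


lemma f_compl (d : ℕ) :
    f d + ((Finset.Icc 1 d).powerset.filter fun A => ¬(A.Nonempty ∧ A.gcd id = 1)).card
      = 2^d := by
  rw [f, Finset.card_filter_add_card_filter_not, Finset.card_powerset, Nat.card_Icc,
    Nat.add_sub_cancel]

lemma f_le (d : ℕ) : f d + 2^(d/2) ≤ 2^d := by
  classical
  have hinj : Function.Injective (fun x : ℕ => 2 * x) := fun a b hab => by dsimp at hab; omega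
  have key : (Finset.Icc 1 (d/2)).powerset.image (Finset.image (fun x => 2*x))
      ⊆ (Finset.Icc 1 d).powerset.filter fun A => ¬(A.Nonempty ∧ A.gcd id = 1) := by
    intro A hA
    simp only [Finset.mem_image, Finset.mem_powerset] at hA
    obtain ⟨B, hB, rfl⟩ := hA
    simp only [Finset.mem_filter, Finset.mem_powerset]
    constructor
    · intro x hx
      simp only [Finset.mem_image] at hx
      obtain ⟨y, hy, rfl⟩ := hx
      have := hB hy
      simp only [Finset.mem_Icc] at this ⊢
      omega
    · rintro ⟨hne, hgcd⟩
      have h2 : (2:ℕ) ∣ (B.image (fun x => 2*x)).gcd id := by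
        refine Finset.dvd_gcd fun b hb => ?_
        simp only [Finset.mem_image] at hb
        obtain ⟨y, _, rfl⟩ := hb
        exact ⟨y, rfl⟩
      rw [hgcd] at h2
      omega
  have hcard : ((Finset.Icc 1 (d/2)).powerset.image (Finset.image (fun x => 2*x))).card
      = 2^(d/2) := by
    rw [Finset.card_image_of_injective _ (Finset.image_injective hinj),
      Finset.card_powerset, Nat.card_Icc, Nat.add_sub_cancel]
  have h1 := Finset.card_le_card key
  rw [hcard] at h1
  have h2 := f_compl d
  omega

lemma f_ge (d : ℕ) : 2^d ≤ f d + 2^(d/2) + d * 2^(d/3) + 1 := by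
  classical
  rcases Nat.lt_or_ge d 2 with hd | hd
  · interval_cases d <;> simp [f_compl] <;> omega
  have hsub : ((Finset.Icc 1 d).powerset.filter fun A => ¬(A.Nonempty ∧ A.gcd id = 1))
      ⊆ (insert 0 (Finset.Icc 2 d)).biUnion
          (fun g => ((Finset.Icc 1 d).filter (fun x => g ∣ x)).powerset) := by
    intro A hA
    simp only [Finset.mem_filter, Finset.mem_powerset] at hA
    obtain ⟨hAsub, hA2⟩ := hA
    rcases A.eq_empty_or_nonempty with rfl | hne
    · exact Finset.mem_biUnion.2 ⟨0, by simp, by simp⟩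
    · have hg1 : A.gcd id ≠ 1 := fun h => hA2 ⟨hne, h⟩
      obtain ⟨a, ha⟩ := hne
      have hdvd : ∀ x ∈ A, A.gcd id ∣ x := fun x hx => Finset.gcd_dvd hx
      have ha' := hAsub ha
      simp only [Finset.mem_Icc] at ha'
      have hga : A.gcd id ∣ a := hdvd a ha
      have hgle : A.gcd id ≤ d := le_trans (Nat.le_of_dvd (by omega) hga) ha'.2
      have hg0 : A.gcd id ≠ 0 := by
        intro h; rw [h] at hga; rw [Nat.zero_dvd] at hga; omega
      refine Finset.mem_biUnion.2 ⟨A.gcd id, ?_, Finset.mem_powerset.2 ?_⟩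
      · simp only [Finset.mem_insert, Finset.mem_Icc]
        right; omega
      · intro x hx
        simp only [Finset.mem_filter]
        exact ⟨hAsub hx, hdvd x hx⟩
  have hcard : ((insert 0 (Finset.Icc 2 d)).biUnion
      (fun g => ((Finset.Icc 1 d).filter (fun x => g ∣ x)).powerset)).card
      ≤ 1 + 2^(d/2) + d * 2^(d/3) := by
    refine le_trans Finset.card_biUnion_le ?_
    rw [Finset.sum_insert (by simp)]
    have h0 : ((Finset.Icc 1 d).filter (fun x => (0:ℕ) ∣ x)) = ∅ := by
      ext x; simp only [Finset.mem_filter, Finset.mem_Icc, Finset.notMem_empty,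
        Nat.zero_dvd, iff_false]
      omega
    rw [h0]
    have hIcc : Finset.Icc 2 d = insert 2 (Finset.Icc 3 d) := by
      ext x; simp only [Finset.mem_Icc, Finset.mem_insert]; omega
    rw [hIcc, Finset.sum_insert (by simp)]
    have hdiv : ∀ g : ℕ, 0 < g →
        ((Finset.Icc 1 d).filter (fun x => g ∣ x)).card = d / g := by
      intro g hg
      have : Finset.Icc 1 d = Finset.Ioc 0 d := rfl
      rw [this]
      exact Nat.Ioc_filter_dvd_card_eq_div d g
    have h2 : ((Finset.Icc 1 d).filter (fun x => (2:ℕ) ∣ x)).powerset.card = 2^(d/2) := by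
      rw [Finset.card_powerset, hdiv 2 (by norm_num)]
    have h3 : ∀ g ∈ Finset.Icc 3 d,
        ((Finset.Icc 1 d).filter (fun x => g ∣ x)).powerset.card ≤ 2^(d/3) := by
      intro g hg
      simp only [Finset.mem_Icc] at hg
      rw [Finset.card_powerset, hdiv g (by omega)]
      exact Nat.pow_le_pow_right (by norm_num) (Nat.div_le_div_left hg.1 (by norm_num))
    have h4 : ∑ g ∈ Finset.Icc 3 d, ((Finset.Icc 1 d).filter (fun x => g ∣ x)).powerset.card
        ≤ (d - 2) * 2^(d/3) := by
      calc ∑ g ∈ Finset.Icc 3 d, ((Finset.Icc 1 d).filter (fun x => g ∣ x)).powerset.card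
          ≤ ∑ _g ∈ Finset.Icc 3 d, 2^(d/3) := Finset.sum_le_sum h3
        _ = (d - 2) * 2^(d/3) := by
            rw [Finset.sum_const, smul_eq_mul, Nat.card_Icc]
            have : d + 1 - 3 = d - 2 := by omega
            rw [this]
    have hd2 : (d - 2) * 2^(d/3) ≤ d * 2^(d/3) := Nat.mul_le_mul_right _ (by omega)
    simp only [Finset.card_powerset, Finset.card_empty, pow_zero] at *
    omega
  have h1 := Finset.card_le_card hsub
  have h2 := f_compl d
  have := le_trans h1 hcard
  omega

lemma sum_D (N : ℕ) : ∑ n ∈ Finset.Icc 1 N, D n = ∑ d ∈ Finset.Icc 1 N, (N/d) * f d := by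
  have h1 : ∀ n ∈ Finset.Icc 1 N, D n = ∑ d ∈ Finset.Icc 1 N, if d ∣ n then f d else 0 := by
    intro n hn
    simp only [Finset.mem_Icc] at hn
    rw [D, ← Finset.sum_filter]
    congr 1
    ext x
    simp only [Nat.mem_divisors, Finset.mem_filter, Finset.mem_Icc]
    constructor
    · rintro ⟨hx, hn0⟩
      have hx1 : 1 ≤ x := Nat.pos_of_dvd_of_pos hx (by omega)
      have hx2 : x ≤ n := Nat.le_of_dvd (by omega) hx
      exact ⟨⟨hx1, by omega⟩, hx⟩
    · rintro ⟨_, hx⟩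
      exact ⟨hx, by omega⟩
  rw [Finset.sum_congr rfl h1, Finset.sum_comm]
  refine Finset.sum_congr rfl fun d hd => ?_
  rw [← Finset.sum_filter, Finset.sum_const, smul_eq_mul]
  congr 1
  have : Finset.Icc 1 N = Finset.Ioc 0 N := rfl
  rw [this]
  exact Nat.Ioc_filter_dvd_card_eq_div N d

lemma main_est (N : ℕ) (hN : 1 ≤ N) :
    |(∑ d ∈ Finset.Ioc 0 N, ((N/d : ℕ) : ℤ) * (f d : ℤ)) - 2^(N+1)
      + ((1 + N % 2 : ℕ) : ℤ) * 2^(N/2)| ≤ 30 * (N:ℤ)^2 * 2^(N/3) := by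
  have hpow3 : (1:ℤ) ≤ 2^(N/3) := one_le_pow₀ (by norm_num)
  have hN1 : (1:ℤ) ≤ (N:ℤ) := by exact_mod_cast hN
  set S := ∑ d ∈ Finset.Ioc 0 N, ((N/d : ℕ) : ℤ) * (f d : ℤ) with hS
  set T := ∑ d ∈ Finset.Ioc 0 N, ((N/d : ℕ) : ℤ) * ((2:ℤ)^d - 2^(d/2)) with hT
  -- Step 1 : |S - T| ≤ 7 N^2 2^(N/3)
  have step1 : |S - T| ≤ 7 * (N:ℤ)^2 * 2^(N/3) := by
    rw [hS, hT, ← Finset.sum_sub_distrib]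
    refine le_trans (Finset.abs_sum_le_sum_abs _ _) ?_
    have hterm : ∀ d ∈ Finset.Ioc 0 N,
        |((N/d : ℕ) : ℤ) * (f d : ℤ) - ((N/d : ℕ) : ℤ) * ((2:ℤ)^d - 2^(d/2))|
          ≤ (N:ℤ) * 2^(d/3) + N := by
      intro d hd
      simp only [Finset.mem_Ioc] at hd
      rw [← mul_sub, abs_mul, abs_of_nonneg (by positivity : (0:ℤ) ≤ ((N/d : ℕ) : ℤ))]
      have hfle : (f d : ℤ) ≤ 2^d - 2^(d/2) := by
        have := f_le d
        have : ((f d + 2^(d/2) : ℕ) : ℤ) ≤ ((2^d : ℕ) : ℤ) := by exact_mod_cast this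
        push_cast at this
        linarith
      have hfge : 2^d - 2^(d/2) - ((d:ℤ) * 2^(d/3) + 1) ≤ (f d : ℤ) := by
        have := f_ge d
        have : ((2^d : ℕ) : ℤ) ≤ ((f d + 2^(d/2) + d * 2^(d/3) + 1 : ℕ) : ℤ) := by
          exact_mod_cast this
        push_cast at this
        linarith
      have habs : |(f d : ℤ) - ((2:ℤ)^d - 2^(d/2))| ≤ (d:ℤ) * 2^(d/3) + 1 := by
        rw [abs_le]; constructor <;> linarith
      calc ((N/d : ℕ) : ℤ) * |(f d : ℤ) - ((2:ℤ)^d - 2^(d/2))|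
          ≤ ((N/d : ℕ) : ℤ) * ((d:ℤ) * 2^(d/3) + 1) := by
            refine mul_le_mul_of_nonneg_left habs (by positivity)
        _ = (((N/d) : ℕ) : ℤ) * (d:ℤ) * 2^(d/3) + ((N/d : ℕ) : ℤ) := by ring
        _ ≤ (N:ℤ) * 2^(d/3) + N := by
            have h1 : (N/d) * d ≤ N := Nat.div_mul_le_self N d
            have h2 : N/d ≤ N := Nat.div_le_self N d
            have h1' : (((N/d) : ℕ) : ℤ) * (d:ℤ) ≤ (N:ℤ) := by exact_mod_cast h1
            have h2' : (((N/d) : ℕ) : ℤ) ≤ (N:ℤ) := by exact_mod_cast h2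
            have hp : (0:ℤ) ≤ 2^(d/3) := by positivity
            nlinarith
    refine le_trans (Finset.sum_le_sum hterm) ?_
    rw [Finset.sum_add_distrib, ← Finset.mul_sum, Finset.sum_const, Nat.card_Ioc,
      nsmul_eq_mul]
    have hV := V_le N
    have hNN : ((N - 0 : ℕ) : ℤ) = (N:ℤ) := by simp
    rw [hNN]
    have hp : (0:ℤ) ≤ 2^(N/3) := by positivity
    nlinarith [mul_le_mul_of_nonneg_left hV (by linarith : (0:ℤ) ≤ (N:ℤ)),
      mul_le_mul_of_nonneg_left hpow3 (by nlinarith : (0:ℤ) ≤ (N:ℤ)*(N:ℤ)),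
      mul_le_mul_of_nonneg_right hN1 (by positivity : (0:ℤ) ≤ (N:ℤ)*2^(N/3)),
      hN1, hp]
  -- Step 2 : split T
  have s1 : N/3 ≤ N/2 := by omega
  have s2 : N/2 ≤ N := by omega
  have s0 : 0 ≤ N/3 := Nat.zero_le _
  -- coefficient identities
  have coef2 : ∀ d ∈ Finset.Ioc (N/3) (N/2), N / d = 2 := by
    intro d hd
    simp only [Finset.mem_Ioc] at hd
    have hd0 : 0 < d := by omega
    have a1 : 2 ≤ N / d := (Nat.le_div_iff_mul_le hd0).2 (by omega)
    have a2 : N / d < 3 := (Nat.div_lt_iff_lt_mul hd0).2 (by omega)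
    omega
  have coef1 : ∀ d ∈ Finset.Ioc (N/2) N, N / d = 1 := by
    intro d hd
    simp only [Finset.mem_Ioc] at hd
    have hd0 : 0 < d := by omega
    have a1 : 1 ≤ N / d := (Nat.le_div_iff_mul_le hd0).2 (by omega)
    have a2 : N / d < 2 := (Nat.div_lt_iff_lt_mul hd0).2 (by omega)
    omega
  set RA := ∑ d ∈ Finset.Ioc 0 (N/3), ((N/d : ℕ) : ℤ) * 2^d with hRAdef
  set RB := ∑ d ∈ Finset.Ioc 0 (N/2), ((N/d : ℕ) : ℤ) * 2^(d/2) with hRBdef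
  set UH := ∑ d ∈ Finset.Ioc 0 (N/2), (2:ℤ)^(d/2) with hUHdef
  have hA : (∑ d ∈ Finset.Ioc 0 N, ((N/d : ℕ) : ℤ) * 2^d)
      = RA + 2*(2^(N/2+1) - 2^(N/3+1)) + (2^(N+1) - 2^(N/2+1)) := by
    rw [← Finset.sum_Ioc_consecutive (fun d => ((N/d : ℕ) : ℤ) * 2^d) (Nat.zero_le (N/2)) s2,
        ← Finset.sum_Ioc_consecutive (fun d => ((N/d : ℕ) : ℤ) * 2^d) (Nat.zero_le (N/3)) s1]
    congr 1
    · congr 1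
      · rw [Finset.sum_congr rfl (fun d hd => by rw [coef2 d hd] : ∀ d ∈ Finset.Ioc (N/3) (N/2),
          ((N/d : ℕ) : ℤ) * 2^d = ((2:ℕ) : ℤ) * 2^d)]
        rw [← Finset.mul_sum, geom_Ioc (N/3) (N/2) s1]
        norm_num
    · rw [Finset.sum_congr rfl (fun d hd => by rw [coef1 d hd] : ∀ d ∈ Finset.Ioc (N/2) N,
        ((N/d : ℕ) : ℤ) * 2^d = ((1:ℕ) : ℤ) * 2^d)]
      rw [← Finset.mul_sum, geom_Ioc (N/2) N s2]
      norm_num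
  have hB : (∑ d ∈ Finset.Ioc 0 N, ((N/d : ℕ) : ℤ) * 2^(d/2))
      = RB + ((if N % 2 = 0 then (3:ℤ) else 4) * 2^(N/2) - 3 - UH) := by
    rw [← Finset.sum_Ioc_consecutive (fun d => ((N/d : ℕ) : ℤ) * 2^(d/2))
        (Nat.zero_le (N/2)) s2]
    have htop : (∑ d ∈ Finset.Ioc (N/2) N, ((N/d : ℕ) : ℤ) * 2^(d/2))
        = ∑ d ∈ Finset.Ioc (N/2) N, (2:ℤ)^(d/2) := by
      refine Finset.sum_congr rfl fun d hd => ?_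
      rw [coef1 d hd]; norm_num
    rw [htop]
    have hU := Finset.sum_Ioc_consecutive (fun d => (2:ℤ)^(d/2)) (Nat.zero_le (N/2)) s2
    have hUN := U_formula N
    have heq : (∑ d ∈ Finset.Ioc (N/2) N, (2:ℤ)^(d/2))
        = (if N % 2 = 0 then (3:ℤ) else 4) * 2^(N/2) - 3 - UH := by
      rw [hUHdef]; linarith [hU, hUN]
    rw [heq]
  have hT2 : T = (∑ d ∈ Finset.Ioc 0 N, ((N/d : ℕ) : ℤ) * 2^d)
      - (∑ d ∈ Finset.Ioc 0 N, ((N/d : ℕ) : ℤ) * 2^(d/2)) := by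
    rw [hT, ← Finset.sum_sub_distrib]
    exact Finset.sum_congr rfl fun d _ => by ring
  have hp23 : (2:ℤ)^(N/2/2) ≤ 2^(N/3) := pow_le_pow_right₀ (by norm_num) (by omega)
  have hRA0 : 0 ≤ RA := Finset.sum_nonneg fun d _ => by positivity
  have hRA : RA ≤ 2 * (N:ℤ) * 2^(N/3) := by
    have h1 : RA ≤ ∑ d ∈ Finset.Ioc 0 (N/3), (N:ℤ) * 2^d := by
      refine Finset.sum_le_sum fun d _ => ?_
      have hc : ((N/d : ℕ) : ℤ) ≤ (N:ℤ) := by exact_mod_cast Nat.div_le_self N d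
      have hp : (0:ℤ) ≤ 2^d := by positivity
      nlinarith
    rw [← Finset.mul_sum, geom_Ioc 0 (N/3) (Nat.zero_le _)] at h1
    have hp : (0:ℤ) ≤ (N:ℤ) := by linarith
    have hps : (2:ℤ)^(N/3+1) = 2 * 2^(N/3) := by rw [pow_succ]; ring
    rw [hps] at h1
    norm_num at h1
    nlinarith [h1, hp]
  have hUH0 : (0:ℤ) ≤ UH := Finset.sum_nonneg fun d _ => by positivity
  have hUH : UH ≤ 4 * 2^(N/3) := le_trans (U_le (N/2)) (by nlinarith [hp23])
  have hRB0 : 0 ≤ RB := Finset.sum_nonneg fun d _ => by positivity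
  have hRB : RB ≤ 4 * (N:ℤ) * 2^(N/3) := by
    have h1 : RB ≤ ∑ d ∈ Finset.Ioc 0 (N/2), (N:ℤ) * 2^(d/2) := by
      refine Finset.sum_le_sum fun d _ => ?_
      have hc : ((N/d : ℕ) : ℤ) ≤ (N:ℤ) := by exact_mod_cast Nat.div_le_self N d
      have hp : (0:ℤ) ≤ 2^(d/2) := by positivity
      nlinarith
    rw [← Finset.mul_sum] at h1
    have h2 : (N:ℤ) * UH ≤ (N:ℤ) * (4 * 2^(N/3)) :=
      mul_le_mul_of_nonneg_left hUH (by linarith)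
    calc RB ≤ (N:ℤ) * UH := h1
      _ ≤ (N:ℤ) * (4 * 2^(N/3)) := h2
      _ = 4 * (N:ℤ) * 2^(N/3) := by ring
  have hs1 := (abs_le.mp step1).1
  have hs2 := (abs_le.mp step1).2
  have hp1 : (2:ℤ)^(N/2+1) = 2 * 2^(N/2) := by rw [pow_succ]; ring
  have hp2 : (2:ℤ)^(N/3+1) = 2 * 2^(N/3) := by rw [pow_succ]; ring
  have hNt : (N:ℤ)*2^(N/3) ≤ (N:ℤ)^2*2^(N/3) := by nlinarith
  have hsq : (1:ℤ) ≤ (N:ℤ)^2*2^(N/3) := by nlinarith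
  have htt : (2:ℤ)^(N/3) ≤ (N:ℤ)^2*2^(N/3) := by nlinarith
  rcases Nat.mod_two_eq_zero_or_one N with hm | hm
  · have hc : ((1 + N % 2 : ℕ) : ℤ) = 1 := by rw [hm]; norm_num
    rw [hm, if_pos rfl] at hB
    rw [hc, abs_le]
    constructor <;> linarith [hA, hB, hT2, hs1, hs2, hRA0, hRA, hRB0, hRB, hUH0, hUH]
  · have hc : ((1 + N % 2 : ℕ) : ℤ) = 2 := by rw [hm]; norm_num
    rw [hm, if_neg one_ne_zero] at hB
    rw [hc, abs_le]
    constructor <;> linarith [hA, hB, hT2, hs1, hs2, hRA0, hRA, hRB0, hRB, hUH0, hUH]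

open Filter in
lemma div_pow_tendsto :
    Filter.Tendsto (fun N : ℕ => 30 * (N:ℝ)^2 / 2^(N/6)) Filter.atTop (nhds 0) := by
  have hmain : Tendsto (fun m : ℕ => (m:ℝ)^2 / 2^m) atTop (nhds 0) :=
    tendsto_pow_const_div_const_pow_of_one_lt 2 (by norm_num)
  have hshift : Tendsto (fun m : ℕ => ((m+1:ℕ):ℝ)^2 / 2^(m+1)) atTop (nhds 0) :=
    hmain.comp (tendsto_add_atTop_nat 1)
  have hconst : Tendsto (fun m : ℕ => 2160 * (((m+1:ℕ):ℝ)^2 / 2^(m+1))) atTop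
      (nhds (2160 * 0)) := hshift.const_mul 2160
  rw [mul_zero] at hconst
  have hdiv6 : Tendsto (fun N : ℕ => N/6) atTop atTop :=
    Filter.tendsto_atTop_atTop.2 fun b => ⟨6*b, fun n h => by omega⟩
  have hcomp := hconst.comp hdiv6
  refine squeeze_zero (fun N => by positivity) (fun N => ?_) hcomp
  show 30*(N:ℝ)^2 / 2^(N/6) ≤ 2160 * ((((N/6)+1 : ℕ):ℝ)^2 / 2^((N/6)+1))
  have h1 : (N:ℝ) ≤ 6*(((N/6)+1 : ℕ):ℝ) := by exact_mod_cast (by omega : N ≤ 6*((N/6)+1))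
  have h2 : (0:ℝ) < 2^(N/6) := by positivity
  have h0 : (0:ℝ) ≤ (N:ℝ) := Nat.cast_nonneg N
  have h3 : 30*(N:ℝ)^2 ≤ 1080 * (((N/6)+1:ℕ):ℝ)^2 := by nlinarith
  have h4 : 2160 * ((((N/6)+1 : ℕ):ℝ)^2 / 2^((N/6)+1)) = (1080 * (((N/6)+1:ℕ):ℝ)^2) / 2^(N/6) := by
    rw [pow_succ]; field_simp; ring
  rw [h4, div_le_div_iff_of_pos_right h2]
  exact h3

lemma abs_div_bound (Y c P E : ℝ) (hP : 0 < P) (hc : 0 ≤ c) (h : |Y + c*P| ≤ E) :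
    |(|Y|/P - c)| ≤ E/P := by
  have h1 : |(|Y| - c*P)| ≤ |Y + c*P| := by
    have e : |(-(c*P))| = c*P := by rw [abs_neg, abs_of_nonneg (mul_nonneg hc hP.le)]
    have a1 := abs_sub_abs_le_abs_sub Y (-(c*P))
    have a2 := abs_sub_abs_le_abs_sub (-(c*P)) Y
    rw [e, sub_neg_eq_add] at a1
    rw [e] at a2
    have e2 : |(-(c*P)) - Y| = |Y + c*P| := by rw [abs_sub_comm, sub_neg_eq_add]
    rw [e2] at a2
    rw [abs_le]
    constructor <;> linarith
  have h2 : |Y|/P - c = (|Y| - c*P)/P := by field_simp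
  rw [h2, abs_div, abs_of_pos hP]
  gcongr
  exact h1.trans h

lemma final_bound (N : ℕ) (hN : 1 ≤ N) :
    |(|(∑ n ∈ Finset.Icc 1 N, (D n : ℝ)) - 2^(N+1)| / 2^(N/2)) - ((1 + N % 2 : ℕ) : ℝ)|
      ≤ 30 * (N:ℝ)^2 / 2^(N/6) := by
  have hIoc : Finset.Icc 1 N = Finset.Ioc 0 N := rfl
  have hsumR : (∑ n ∈ Finset.Icc 1 N, (D n : ℝ))
      = ∑ d ∈ Finset.Ioc 0 N, ((N/d : ℕ):ℝ) * ((f d : ℕ):ℝ) := by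
    rw [show (∑ n ∈ Finset.Icc 1 N, (D n:ℝ)) = ((∑ n ∈ Finset.Icc 1 N, D n : ℕ):ℝ) by
      push_cast; rfl, sum_D N, hIoc]
    push_cast
    rfl
  have hm := main_est N hN
  have hP : (0:ℝ) < 2^(N/2) := by positivity
  have h6 : (0:ℝ) < 2^(N/6) := by positivity
  have hc0 : (0:ℝ) ≤ ((1 + N % 2 : ℕ) : ℝ) := Nat.cast_nonneg _
  have hmR : |((∑ n ∈ Finset.Icc 1 N, (D n : ℝ)) - 2^(N+1))
      + ((1 + N % 2 : ℕ) : ℝ) * 2^(N/2)| ≤ 30 * (N:ℝ)^2 * 2^(N/3) := by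
    have e1 : ((∑ n ∈ Finset.Icc 1 N, (D n : ℝ)) - 2^(N+1))
        + ((1 + N % 2 : ℕ) : ℝ) * 2^(N/2)
        = (((∑ d ∈ Finset.Ioc 0 N, ((N/d : ℕ) : ℤ) * (f d : ℤ)) - 2^(N+1)
          + ((1 + N % 2 : ℕ) : ℤ) * 2^(N/2) : ℤ) : ℝ) := by
      rw [hsumR]
      simp only [Int.cast_add, Int.cast_sub, Int.cast_mul, Int.cast_pow, Int.cast_sum,
        Int.cast_natCast, Int.cast_ofNat]
    rw [e1, ← Int.cast_abs]
    calc (((|(∑ d ∈ Finset.Ioc 0 N, ((N/d : ℕ) : ℤ) * (f d : ℤ)) - 2^(N+1)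
          + ((1 + N % 2 : ℕ) : ℤ) * 2^(N/2)| : ℤ)) : ℝ)
        ≤ ((30 * (N:ℤ)^2 * 2^(N/3) : ℤ) : ℝ) := Int.cast_le.mpr hm
      _ = 30 * (N:ℝ)^2 * 2^(N/3) := by push_cast; ring
  have hmain := abs_div_bound ((∑ n ∈ Finset.Icc 1 N, (D n : ℝ)) - 2^(N+1))
    ((1 + N % 2 : ℕ) : ℝ) (2^(N/2)) (30 * (N:ℝ)^2 * 2^(N/3)) hP hc0 hmR
  refine hmain.trans ?_
  rw [div_le_div_iff₀ hP h6]
  have hexp : (2:ℝ)^(N/3) * 2^(N/6) ≤ 2^(N/2) := by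
    rw [← pow_add]
    exact pow_le_pow_right₀ (by norm_num) (by omega)
  calc (30 * (N:ℝ)^2 * 2^(N/3)) * 2^(N/6) = 30 * (N:ℝ)^2 * (2^(N/3) * 2^(N/6)) := by ring
    _ ≤ 30 * (N:ℝ)^2 * 2^(N/2) := by gcongr
    _ = 30 * (N:ℝ)^2 * 2^(N/2) := rfl

open Filter in
lemma tendsto_aux (s : Set ℕ) (c : ℝ)
    (hc : ∀ N ∈ s, ((1 + N % 2 : ℕ) : ℝ) = c) :
    Filter.Tendsto
      (fun N : ℕ => |(∑ n ∈ Finset.Icc 1 N, (D n : ℝ)) - 2 ^ (N + 1)| / 2 ^ (N / 2))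
      (Filter.atTop ⊓ Filter.principal s) (nhds c) := by
  set g := fun N : ℕ => |(∑ n ∈ Finset.Icc 1 N, (D n : ℝ)) - 2 ^ (N + 1)| / 2 ^ (N / 2) with hg
  have hb : Tendsto (fun N : ℕ => 30*(N:ℝ)^2/2^(N/6)) (atTop ⊓ 𝓟 s) (nhds 0) :=
    div_pow_tendsto.mono_left inf_le_left
  have h1 : ∀ᶠ N in atTop ⊓ 𝓟 s, 1 ≤ N := (eventually_ge_atTop 1).filter_mono inf_le_left
  have h2 : ∀ᶠ N in atTop ⊓ 𝓟 s, N ∈ s := by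
    rw [Filter.eventually_inf_principal]
    exact Filter.Eventually.of_forall fun _ h => h
  have hsq : Tendsto (fun N => g N - c) (atTop ⊓ 𝓟 s) (nhds 0) := by
    refine squeeze_zero_norm' ?_ hb
    filter_upwards [h1, h2] with N hN1 hN2
    rw [Real.norm_eq_abs]
    have hfb := final_bound N hN1
    rwa [hc N hN2] at hfb
  have := hsq.add (tendsto_const_nhds (x := c) (f := atTop ⊓ 𝓟 s))
  simpa using this

/-- Along odd `N`, `|∑_{n ≤ N} D(n) - 2^{N+1}| / 2^{⌊N/2⌋} → 2`, and along even `N` it tends to `1`. -/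
theorem tendsto_D_error :
    Filter.Tendsto
      (fun N : ℕ => |(∑ n ∈ Finset.Icc 1 N, (D n : ℝ)) - 2 ^ (N + 1)| / 2 ^ (N / 2))
      (Filter.atTop ⊓ Filter.principal {N : ℕ | Odd N}) (nhds 2) ∧
    Filter.Tendsto
      (fun N : ℕ => |(∑ n ∈ Finset.Icc 1 N, (D n : ℝ)) - 2 ^ (N + 1)| / 2 ^ (N / 2))
      (Filter.atTop ⊓ Filter.principal {N : ℕ | Even N}) (nhds 1) := by
  constructor
  · refine tendsto_aux _ 2 fun N hN => ?_
    have h : N % 2 = 1 := Nat.odd_iff.mp hN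
    rw [h]; norm_num
  · refine tendsto_aux _ 1 fun N hN => ?_
    have h : N % 2 = 0 := Nat.even_iff.mp hN
    rw [h]; norm_num
end
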